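/- arXiv:1904.11596 — 7 statements merged into one kernel-verified Lean document; each statement's English description precedes it below -/
import Mathlib

section
/- Let B ≥ 2, let m ≥ 1, and let (θ_p, φ_p) ∈ [0,π]×[0,2π), p = 1,…,m, be sampling points such that all columns of the spherical-harmonic sensing matrix A ∈ ℂ^{m×B^2} are nonzero. Suppose there exists an integer k with 1 ≤ k ≤ B−1 such that 2kφ_i ≡ 2kφ_j (mod 2π) for all i, j ∈ {1,…,m}. Then the mutual coherence of A attains its maximum: μ(A) = 1. -/
open scoped Real BigOperators

/-- Associated Legendre polynomial `P_l^k(x)` for integer order `k` (possibly negative). -/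
noncomputable def assocLegendre (l : ℕ) (k : ℤ) (x : ℝ) : ℝ :=
  ((-1 : ℝ) ^ k / (2 ^ l * (Nat.factorial l : ℝ))) * (1 - x ^ 2) ^ ((k : ℝ) / 2) *
    iteratedDeriv (k + (l : ℤ)).toNat (fun y : ℝ => (y ^ 2 - 1) ^ l) x

/-- Normalization factor of spherical harmonics. -/
noncomputable def shNormFactor (l : ℕ) (k : ℤ) : ℝ :=
  Real.sqrt ((2 * (l : ℝ) + 1) / (4 * Real.pi) *
    ((Nat.factorial ((l : ℤ) - k).toNat : ℝ) / (Nat.factorial ((l : ℤ) + k).toNat : ℝ)))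

/-- Spherical harmonic `Y_l^k(θ,φ)`. -/
noncomputable def sphericalHarmonic (l : ℕ) (k : ℤ) (θ φ : ℝ) : ℂ :=
  ((shNormFactor l k * assocLegendre l k (Real.cos θ) : ℝ) : ℂ) *
    Complex.exp (Complex.I * (k : ℂ) * (φ : ℂ))

/-- Jacobi polynomial `P_α^{(ξ,λ)}(x)`. -/
noncomputable def jacobiP (a ξ lam : ℕ) (x : ℝ) : ℝ :=
  ((-1 : ℝ) ^ a / (2 ^ a * (Nat.factorial a : ℝ))) * (1 - x) ^ (-(ξ : ℤ)) *
    (1 + x) ^ (-(lam : ℤ)) *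
    iteratedDeriv a (fun y : ℝ => (1 - y) ^ ξ * (1 + y) ^ lam * (1 - y ^ 2) ^ a) x

/-- The coefficient `γ = α!(α+ξ+λ)!/((α+ξ)!(α+λ)!)`. -/
noncomputable def jacobiGamma (a ξ lam : ℕ) : ℝ :=
  ((Nat.factorial a : ℝ) * (Nat.factorial (a + ξ + lam) : ℝ)) /
    ((Nat.factorial (a + ξ) : ℝ) * (Nat.factorial (a + lam) : ℝ))

/-- Wigner d-function `d_l^{k,n}(cos θ)` (as a function of `θ`). -/
noncomputable def wignerd (l : ℕ) (k n : ℤ) (θ : ℝ) : ℝ :=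
  let ξ : ℕ := (k - n).natAbs
  let lam : ℕ := (k + n).natAbs
  let a : ℕ := l - (ξ + lam) / 2
  let ω : ℝ := if k ≤ n then 1 else (-1 : ℝ) ^ (n - k)
  ω * Real.sqrt (jacobiGamma a ξ lam) * (Real.sin (θ / 2)) ^ ξ * (Real.cos (θ / 2)) ^ lam *
    jacobiP a ξ lam (Real.cos θ)

/-- Wigner D-function `D_l^{k,n}(θ,φ,χ)`. -/
noncomputable def wignerD (l : ℕ) (k n : ℤ) (θ φ χ : ℝ) : ℂ :=
  ((Real.sqrt ((2 * (l : ℝ) + 1) / (8 * Real.pi ^ 2)) : ℝ) : ℂ) *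
    Complex.exp (-(Complex.I * (k : ℂ) * (φ : ℂ))) * ((wignerd l k n θ : ℝ) : ℂ) *
    Complex.exp (-(Complex.I * (n : ℂ) * (χ : ℂ)))

/-- Column index set for the spherical-harmonic sensing matrix: pairs `(l,k)`,
`0 ≤ l ≤ B-1`, `-l ≤ k ≤ l`.  It has `B^2` elements. -/
abbrev SHIndex (B : ℕ) := Σ l : Fin B, ↥(Set.Icc (-(l.1 : ℤ)) (l.1 : ℤ))

/-- Column index set for the Wigner-D sensing matrix: triples `(l,k,n)`,
`0 ≤ l ≤ B-1`, `-l ≤ k,n ≤ l`.  It has `B(2B-1)(2B+1)/3` elements. -/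
abbrev WDIndex (B : ℕ) :=
  Σ l : Fin B, ↥(Set.Icc (-(l.1 : ℤ)) (l.1 : ℤ)) × ↥(Set.Icc (-(l.1 : ℤ)) (l.1 : ℤ))

/-- The spherical-harmonic sensing matrix. -/
noncomputable def shMatrix {m : ℕ} (B : ℕ) (θ φ : Fin m → ℝ) :
    Matrix (Fin m) (SHIndex B) ℂ :=
  fun p i => sphericalHarmonic i.1.1 i.2.1 (θ p) (φ p)

/-- The Wigner-D sensing matrix. -/
noncomputable def wdMatrix {m : ℕ} (B : ℕ) (θ φ χ : Fin m → ℝ) :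
    Matrix (Fin m) (WDIndex B) ℂ :=
  fun p i => wignerD i.1.1 i.2.1.1 i.2.2.1 (θ p) (φ p) (χ p)

/-- Mutual coherence of a matrix: the supremum over pairs of distinct columns of the
normalized absolute inner product. -/
noncomputable def mutualCoherence {m : ℕ} {ι : Type*} (A : Matrix (Fin m) ι ℂ) : ℝ :=
  sSup {x : ℝ | ∃ i j : ι, i ≠ j ∧
    x = ‖∑ p, (starRingEnd ℂ) (A p i) * A p j‖ /
        (Real.sqrt (∑ p, Complex.normSq (A p i)) * Real.sqrt (∑ p, Complex.normSq (A p j)))}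


/-! For `1 ≤ k < B` the columns of the sensing matrix indexed by `(k, k)` and `(k, -k)` are
parallel. Indeed `Y_k^{-k} = (-1)^k conj Y_k^k`, and since `Y_k^k(θ, φ)` is a real multiple of
`e^{ikφ}`, `conj Y_k^k(θ, φ) = e^{-2ikφ} Y_k^k(θ, φ)`; the hypothesis on the azimuths makes
`e^{-2ikφ_p}` independent of `p`. Distinct parallel nonzero columns attain equality in
Cauchy–Schwarz, which bounds every normalized inner product of columns by `1`. -/

open Polynomial ComplexConjugate
open scoped Matrix InnerProductSpace

lemma iteratedDeriv_eval_polynomial (p : ℝ[X]) (n : ℕ) :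
    iteratedDeriv n (fun x => p.eval x) = fun x => (derivative^[n] p).eval x := by
  induction n with
  | zero => simp
  | succ n ih =>
    rw [iteratedDeriv_succ, ih]
    funext x
    rw [Function.iterate_succ_apply']
    exact (derivative^[n] p).deriv

lemma iterate_derivative_of_natDegree_le (p : ℝ[X]) {n : ℕ} (h : p.natDegree ≤ n) :
    derivative^[n] p = C ((n.factorial : ℝ) * p.coeff n) := by
  have h0 : (derivative^[n] p).natDegree ≤ 0 :=
    (natDegree_iterate_derivative p n).trans (by omega)
  rw [eq_C_of_natDegree_le_zero h0, coeff_iterate_derivative]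
  simp [Nat.descFactorial_self]

lemma iteratedDeriv_two_mul_sq_sub_one_pow (l : ℕ) (x : ℝ) :
    iteratedDeriv (2 * l) (fun y : ℝ => (y ^ 2 - 1) ^ l) x = ((2 * l).factorial : ℝ) := by
  have hmonic : ((X ^ 2 - 1 : ℝ[X]) ^ l).Monic := (monic_X_pow_sub_C (1 : ℝ) two_ne_zero).pow l
  have hdeg : ((X ^ 2 - 1 : ℝ[X]) ^ l).natDegree = 2 * l := by
    rw [natDegree_pow, ← C_1, natDegree_X_pow_sub_C, mul_comm]
  have hfun : (fun y : ℝ => (y ^ 2 - 1) ^ l) = fun y => ((X ^ 2 - 1 : ℝ[X]) ^ l).eval y := by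
    simp
  rw [hfun, iteratedDeriv_eval_polynomial, iterate_derivative_of_natDegree_le _ hdeg.le,
    ← hdeg, coeff_natDegree, hmonic.leadingCoeff]
  simp

lemma rpow_neg_half_mul_pow (u : ℝ) (l : ℕ) :
    u ^ (-(l : ℝ) / 2) * u ^ l = u ^ ((l : ℝ) / 2) := by
  rcases eq_or_ne u 0 with rfl | hu
  · rcases Nat.eq_zero_or_pos l with rfl | hl
    · simp
    · rw [zero_pow hl.ne', mul_zero, Real.zero_rpow (by positivity)]
  · rw [← Real.rpow_add_natCast hu]
    ring_nf

lemma assocLegendre_self (l : ℕ) (x : ℝ) :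
    assocLegendre l (l : ℤ) x =
      (-1) ^ l * (2 * l).factorial / (2 ^ l * l.factorial) * (1 - x ^ 2) ^ ((l : ℝ) / 2) := by
  rw [assocLegendre, show ((l : ℤ) + l).toNat = 2 * l by omega,
    iteratedDeriv_two_mul_sq_sub_one_pow, zpow_natCast, Int.cast_natCast]
  ring

lemma assocLegendre_neg_self (l : ℕ) (x : ℝ) :
    assocLegendre l (-(l : ℤ)) x = (-1) ^ l / (2 * l).factorial * assocLegendre l (l : ℤ) x := by
  have hpow : (x ^ 2 - 1) ^ l = (-1) ^ l * (1 - x ^ 2) ^ l := by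
    rw [← mul_pow]; ring
  rw [assocLegendre_self, assocLegendre, show (-(l : ℤ) + l).toNat = 0 by omega,
    iteratedDeriv_zero, hpow, zpow_neg, zpow_natCast, ← inv_pow, inv_neg_one, Int.cast_neg,
    Int.cast_natCast, ← rpow_neg_half_mul_pow (1 - x ^ 2) l]
  field_simp

lemma shNormFactor_neg_self (l : ℕ) :
    shNormFactor l (-(l : ℤ)) = (2 * l).factorial * shNormFactor l (l : ℤ) := by
  have hfact : (0 : ℝ) < (2 * l).factorial := by positivity
  simp only [shNormFactor, show ((l : ℤ) - -l).toNat = 2 * l by omega,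
    show ((l : ℤ) + -l).toNat = 0 by omega, show ((l : ℤ) - l).toNat = 0 by omega,
    show ((l : ℤ) + l).toNat = 2 * l by omega, Nat.factorial_zero, Nat.cast_one]
  rw [← Real.sqrt_sq hfact.le, ← Real.sqrt_mul (sq_nonneg _), Real.sqrt_sq hfact.le]
  congr 1
  field_simp

lemma conj_sphericalHarmonic (l : ℕ) (k : ℤ) (θ φ : ℝ) :
    conj (sphericalHarmonic l k θ φ) =
      Complex.exp (-(2 * Complex.I * k * φ)) * sphericalHarmonic l k θ φ := by
  rw [sphericalHarmonic, map_mul, Complex.conj_ofReal, ← Complex.exp_conj, mul_left_comm,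
    ← Complex.exp_add]
  congr 2
  simp only [map_mul, Complex.conj_I, map_intCast, Complex.conj_ofReal]
  ring

lemma sphericalHarmonic_neg_self (l : ℕ) (θ φ : ℝ) :
    sphericalHarmonic l (-(l : ℤ)) θ φ = (-1) ^ l * conj (sphericalHarmonic l (l : ℤ) θ φ) := by
  have hfact : ((2 * l).factorial : ℂ) ≠ 0 := Nat.cast_ne_zero.mpr (Nat.factorial_ne_zero _)
  rw [sphericalHarmonic, sphericalHarmonic, shNormFactor_neg_self, assocLegendre_neg_self,
    map_mul, Complex.conj_ofReal, ← Complex.exp_conj]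
  simp only [map_mul, Complex.conj_I, map_intCast, Complex.conj_ofReal]
  push_cast
  field_simp

section Coherence

variable {m : ℕ} {ι : Type*} (A : Matrix (Fin m) ι ℂ)

lemma inner_toLp_transpose (i j : ι) :
    ⟪WithLp.toLp 2 (Aᵀ i), WithLp.toLp 2 (Aᵀ j)⟫_ℂ = ∑ p, conj (A p i) * A p j := by
  simp [PiLp.inner_apply, mul_comm]

lemma norm_toLp_transpose (i : ι) :
    ‖WithLp.toLp 2 (Aᵀ i)‖ = √(∑ p, Complex.normSq (A p i)) := by
  simp [EuclideanSpace.norm_eq, Complex.normSq_eq_norm_sq]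

lemma mutualCoherence_eq_sSup_inner :
    mutualCoherence A = sSup {x : ℝ | ∃ i j : ι, i ≠ j ∧
      x = ‖⟪WithLp.toLp 2 (Aᵀ i), WithLp.toLp 2 (Aᵀ j)⟫_ℂ‖ /
        (‖WithLp.toLp 2 (Aᵀ i)‖ * ‖WithLp.toLp 2 (Aᵀ j)‖)} := by
  simp only [mutualCoherence, inner_toLp_transpose, norm_toLp_transpose]

theorem mutualCoherence_eq_one_of_col_eq_smul {i j : ι} (hij : i ≠ j) (c : ℂ)
    (hcol : ∀ p, A p j = c * A p i) (hj : ∃ p, A p j ≠ 0) : mutualCoherence A = 1 := by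
  set u : ι → EuclideanSpace ℂ (Fin m) := fun a => WithLp.toLp 2 (Aᵀ a)
  have huj : u j = c • u i := by ext p; exact hcol p
  obtain ⟨p, hp⟩ := hj
  have hc : c ≠ 0 := by rintro rfl; exact hp (by simpa using hcol p)
  have hui : u i ≠ 0 := fun h => hp (by simpa [h, u] using congrArg (· p) huj)
  rw [mutualCoherence_eq_sSup_inner]
  have hle : ∀ x ∈ {x : ℝ | ∃ a b : ι, a ≠ b ∧ x = ‖⟪u a, u b⟫_ℂ‖ / (‖u a‖ * ‖u b‖)}, x ≤ 1 := by
    rintro x ⟨a, b, -, rfl⟩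
    exact div_le_one_of_le₀ (norm_inner_le_norm _ _) (by positivity)
  have hmem : (1 : ℝ) ∈ {x : ℝ | ∃ a b : ι, a ≠ b ∧ x = ‖⟪u a, u b⟫_ℂ‖ / (‖u a‖ * ‖u b‖)} :=
    ⟨i, j, hij, by rw [huj, norm_inner_div_norm_mul_norm_eq_one_of_ne_zero_of_ne_zero_mul hui hc]⟩
  exact le_antisymm (csSup_le ⟨1, hmem⟩ hle) (le_csSup ⟨1, hle⟩ hmem)

end Coherence

lemma exp_neg_two_mul_I_mul_eq {k t : ℤ} {a b : ℝ}
    (h : 2 * (k : ℝ) * a - 2 * (k : ℝ) * b = t * (2 * π)) :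
    Complex.exp (-(2 * Complex.I * k * a)) = Complex.exp (-(2 * Complex.I * k * b)) := by
  refine Complex.exp_eq_exp_iff_exists_int.mpr ⟨-t, ?_⟩
  have hC := congrArg (fun r : ℝ => (r : ℂ)) h
  push_cast at hC ⊢
  linear_combination (-Complex.I) * hC

theorem shMatrix_full_coherence_general (B m : ℕ)
    (θ φ : Fin m → ℝ)
    (hcols : ∀ i : SHIndex B, ∃ p, shMatrix B θ φ p i ≠ 0)
    (k : ℤ) (hk₁ : 1 ≤ k) (hk₂ : k ≤ (B : ℤ) - 1)
    (hmod : ∀ i j : Fin m, ∃ t : ℤ, 2 * (k : ℝ) * φ i - 2 * (k : ℝ) * φ j = t * (2 * Real.pi)) :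
    mutualCoherence (shMatrix B θ φ) = 1 := by
  lift k to ℕ using by omega
  have hkB : k < B := by omega
  let i : SHIndex B := ⟨⟨k, hkB⟩, ⟨k, by simp⟩⟩
  let j : SHIndex B := ⟨⟨k, hkB⟩, ⟨-k, by simp⟩⟩
  have hij : i ≠ j := by simp [i, j]; omega
  obtain ⟨q, hq⟩ := hcols j
  refine mutualCoherence_eq_one_of_col_eq_smul _ hij
    ((-1) ^ k * Complex.exp (-(2 * Complex.I * (k : ℤ) * φ q))) (fun p => ?_) ⟨q, hq⟩
  obtain ⟨t, ht⟩ := hmod p q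
  change sphericalHarmonic k (-(k : ℤ)) (θ p) (φ p) = _ * sphericalHarmonic k (k : ℤ) (θ p) (φ p)
  rw [sphericalHarmonic_neg_self, conj_sphericalHarmonic, exp_neg_two_mul_I_mul_eq ht]
  ring

/-- if the azimuth samples satisfy `2kφ_i ≡ 2kφ_j (mod 2π)` for some order
`1 ≤ k ≤ B-1`, then the spherical-harmonic sensing matrix has mutual coherence `1`. -/
theorem shMatrix_full_coherence (B m : ℕ) (hB : 2 ≤ B) (hm : 1 ≤ m)
    (θ φ : Fin m → ℝ)
    (hθ : ∀ p, θ p ∈ Set.Icc 0 Real.pi) (hφ : ∀ p, φ p ∈ Set.Ico 0 (2 * Real.pi))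
    (hcols : ∀ i : SHIndex B, ∃ p, shMatrix B θ φ p i ≠ 0)
    (k : ℤ) (hk₁ : 1 ≤ k) (hk₂ : k ≤ (B : ℤ) - 1)
    (hmod : ∀ i j : Fin m, ∃ t : ℤ, 2 * (k : ℝ) * φ i - 2 * (k : ℝ) * φ j = t * (2 * Real.pi)) :
    mutualCoherence (shMatrix B θ φ) = 1 :=
  shMatrix_full_coherence_general B m θ φ hcols k hk₁ hk₂ hmod
end

section
/- Let (θ_p, φ_p) ∈ [0,π]×[0,2π), p = 1,…,m, be sampling points whose elevations are cosine-symmetric, i.e., there is a permutation σ of {1,…,m} with cos θ_{σ(p)} = −cos θ_p for all p. Let k be an integer and let l_1, l_2 ≥ |k| be integers such that l_1 + l_2 is odd. Then Σ_{p=1}^m conj(Y_{l_1}^k(θ_p, φ_p)) · Y_{l_2}^k(θ_p, φ_p) = 0; that is, the two corresponding columns of the spherical-harmonic sensing matrix are orthogonal. -/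
open scoped Real BigOperators

/-!
`(x² - 1)^l` is even, so its `(k + l)`-th derivative, and with it `P_l^k`, has parity
`(-1)^(k + l)`. The azimuthal phases cancel in `conj (Y_{l₁}^k) · Y_{l₂}^k`, leaving
`P_{l₁}^k(cos θ) P_{l₂}^k(cos θ)` up to a constant: an odd function of `cos θ` when `l₁ + l₂`
is odd. Reindexing the sum by `σ` therefore negates it.
-/

theorem Function.Even.iteratedDeriv_neg {𝕜 : Type*} [NontriviallyNormedField 𝕜] {f : 𝕜 → 𝕜}
    (hf : f.Even) (n : ℕ) (x : 𝕜) :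
    iteratedDeriv n f (-x) = (-1) ^ n * iteratedDeriv n f x := by
  simpa only [funext hf, neg_neg, smul_eq_mul] using iteratedDeriv_comp_neg n f (-x)

theorem assocLegendre_neg (l : ℕ) (k : ℤ) (x : ℝ) :
    assocLegendre l k (-x) = (-1) ^ (k + l).toNat * assocLegendre l k x := by
  have heven : (fun y : ℝ => (y ^ 2 - 1) ^ l).Even := fun y => by simp only [neg_sq]
  unfold assocLegendre
  rw [neg_sq, heven.iteratedDeriv_neg, mul_left_comm]

theorem assocLegendre_mul_assocLegendre_neg {k : ℤ} {l₁ l₂ : ℕ} (h₁ : 0 ≤ k + l₁)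
    (h₂ : 0 ≤ k + l₂) (hodd : Odd (l₁ + l₂)) (x : ℝ) :
    assocLegendre l₁ k (-x) * assocLegendre l₂ k (-x) =
      -(assocLegendre l₁ k x * assocLegendre l₂ k x) := by
  have hsign : Odd ((k + l₁).toNat + (k + l₂).toNat) := by
    rw [← Int.odd_coe_nat]
    push_cast [Int.toNat_of_nonneg h₁, Int.toNat_of_nonneg h₂]
    rw [show k + l₁ + (k + l₂) = 2 * k + ((l₁ + l₂ : ℕ) : ℤ) by push_cast; ring]
    exact (even_two_mul k).add_odd ((Int.odd_coe_nat _).2 hodd)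
  have hproduct : (-1 : ℝ) ^ (k + l₁).toNat * (-1) ^ (k + l₂).toNat = -1 := by
    rw [← pow_add, hsign.neg_one_pow]
  rw [assocLegendre_neg, assocLegendre_neg]
  linear_combination (assocLegendre l₁ k x * assocLegendre l₂ k x) * hproduct

theorem conj_sphericalHarmonic_mul_sphericalHarmonic (l₁ l₂ : ℕ) (k : ℤ) (θ φ : ℝ) :
    (starRingEnd ℂ) (sphericalHarmonic l₁ k θ φ) * sphericalHarmonic l₂ k θ φ =
      ((shNormFactor l₁ k * shNormFactor l₂ k *
        (assocLegendre l₁ k (Real.cos θ) * assocLegendre l₂ k (Real.cos θ)) : ℝ) : ℂ) := by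
  have hphase : (starRingEnd ℂ) (Complex.exp (Complex.I * k * φ)) *
      Complex.exp (Complex.I * k * φ) = 1 := by
    rw [← Complex.exp_conj, ← Complex.exp_add]
    simp [Complex.conj_ofReal]
  unfold sphericalHarmonic
  rw [map_mul, Complex.conj_ofReal, mul_mul_mul_comm, hphase, mul_one]
  push_cast
  ring

theorem Equiv.Perm.sum_eq_zero_of_comp_eq_neg {ι M : Type*} [Fintype ι] [AddCommGroup M]
    [IsAddTorsionFree M] (σ : Equiv.Perm ι) {v : ι → M} (hv : ∀ p, v (σ p) = -v p) :
    ∑ p, v p = 0 := by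
  rw [← neg_eq_self, ← Finset.sum_neg_distrib, ← Equiv.sum_comp σ v]
  simp only [hv]

theorem sphericalHarmonic_columns_orthogonal_general (m : ℕ) (θ φ : Fin m → ℝ)
    (σ : Equiv.Perm (Fin m)) (hσ : ∀ p, Real.cos (θ (σ p)) = -Real.cos (θ p))
    (k : ℤ) (l₁ l₂ : ℕ) (hl₁ : k.natAbs ≤ l₁) (hl₂ : k.natAbs ≤ l₂) (hodd : Odd (l₁ + l₂)) :
    ∑ p, (starRingEnd ℂ) (sphericalHarmonic l₁ k (θ p) (φ p)) *
      sphericalHarmonic l₂ k (θ p) (φ p) = 0 := by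
  simp_rw [conj_sphericalHarmonic_mul_sphericalHarmonic]
  refine σ.sum_eq_zero_of_comp_eq_neg fun p => ?_
  rw [hσ, assocLegendre_mul_assocLegendre_neg (by omega) (by omega) hodd]
  push_cast
  ring

/-- for cosine-symmetric elevation samples, two spherical-harmonic columns with
equal order `k` and degrees `l₁, l₂` with `l₁ + l₂` odd are orthogonal. -/
theorem sphericalHarmonic_columns_orthogonal (m : ℕ) (θ φ : Fin m → ℝ)
    (hθ : ∀ p, θ p ∈ Set.Icc 0 Real.pi) (hφ : ∀ p, φ p ∈ Set.Ico 0 (2 * Real.pi))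
    (σ : Equiv.Perm (Fin m)) (hσ : ∀ p, Real.cos (θ (σ p)) = -Real.cos (θ p))
    (k : ℤ) (l₁ l₂ : ℕ) (hl₁ : k.natAbs ≤ l₁) (hl₂ : k.natAbs ≤ l₂) (hodd : Odd (l₁ + l₂)) :
    ∑ p, (starRingEnd ℂ) (sphericalHarmonic l₁ k (θ p) (φ p)) *
      sphericalHarmonic l₂ k (θ p) (φ p) = 0 :=
  sphericalHarmonic_columns_orthogonal_general m θ φ σ hσ k l₁ l₂ hl₁ hl₂ hodd
end

section
/- Let (θ_p, φ_p, χ_p) ∈ [0,π]×[0,2π)×[0,2π), p = 1,…,m, be sampling points whose elevations are cosine-symmetric, i.e., there is a permutation σ of {1,…,m} with cos θ_{σ(p)} = −cos θ_p for all p. Let k be an integer and let l_1, l_2 ≥ |k| be integers such that l_1 + l_2 is odd. Then Σ_{p=1}^m conj(D_{l_1}^{k,0}(θ_p, φ_p, χ_p)) · D_{l_2}^{k,0}(θ_p, φ_p, χ_p) = 0; that is, the two corresponding columns of the Wigner-D sensing matrix are orthogonal. -/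
open scoped Real BigOperators

/-! Reflecting `θ ↦ π - θ` multiplies `d_l^{k,0}` by `(-1)^(l-|k|)`, by the parity
`P_α^{(ξ,ξ)}(-x) = (-1)^α P_α^{(ξ,ξ)}(x)` of the Jacobi polynomial, while the phases of
`conj(D_{l₁}^{k,0}) · D_{l₂}^{k,0}` cancel. With `l₁ + l₂` odd the summand therefore changes
sign under the permutation `σ`, which forces the sum to vanish. -/

lemma jacobiP_neg (a ξ lam : ℕ) (x : ℝ) :
    jacobiP a ξ lam (-x) = (-1 : ℝ) ^ a * jacobiP a lam ξ x := by
  let weight : ℕ → ℕ → ℝ → ℝ := fun ξ lam y => (1 - y) ^ ξ * (1 + y) ^ lam * (1 - y ^ 2) ^ a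
  have hreflect : (fun y => weight lam ξ (-y)) = weight ξ lam := by
    funext y
    simp only [weight]
    ring
  have hderiv : iteratedDeriv a (weight ξ lam) (-x) =
      (-1 : ℝ) ^ a * iteratedDeriv a (weight lam ξ) x := by
    rw [← hreflect, iteratedDeriv_comp_neg, neg_neg, smul_eq_mul]
  simp only [weight] at hderiv
  rw [jacobiP, jacobiP, hderiv, sub_neg_eq_add, ← sub_eq_add_neg]
  ring

lemma wignerd_pi_sub (l : ℕ) (k : ℤ) (θ : ℝ) :
    wignerd l k 0 (π - θ) = (-1 : ℝ) ^ (l - k.natAbs) * wignerd l k 0 θ := by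
  have hhalf : (π - θ) / 2 = π / 2 - θ / 2 := by ring
  have hα : (k.natAbs + k.natAbs) / 2 = k.natAbs := by omega
  simp only [wignerd, sub_zero, add_zero, hα, hhalf, Real.sin_pi_div_two_sub,
    Real.cos_pi_div_two_sub, Real.cos_pi_sub, jacobiP_neg]
  ring

lemma conj_wignerD_mul_wignerD (l₁ l₂ : ℕ) (k n : ℤ) (θ φ χ : ℝ) :
    (starRingEnd ℂ) (wignerD l₁ k n θ φ χ) * wignerD l₂ k n θ φ χ =
      ((√((2 * l₁ + 1) / (8 * π ^ 2)) * √((2 * l₂ + 1) / (8 * π ^ 2)) *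
        (wignerd l₁ k n θ * wignerd l₂ k n θ) : ℝ) : ℂ) := by
  have hphase (c : ℤ) (t : ℝ) :
      (starRingEnd ℂ) (Complex.exp (-(Complex.I * c * t))) * Complex.exp (-(Complex.I * c * t))
        = 1 := by
    rw [← Complex.exp_conj, ← Complex.exp_add]
    simp
  simp only [wignerD, map_mul, Complex.conj_ofReal]
  push_cast
  linear_combination (√((2 * l₁ + 1) / (8 * π ^ 2)) * √((2 * l₂ + 1) / (8 * π ^ 2)) *
    wignerd l₁ k n θ * wignerd l₂ k n θ : ℂ) *
      ((starRingEnd ℂ) (Complex.exp (-(Complex.I * n * χ))) * Complex.exp (-(Complex.I * n * χ))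
        * hphase k φ + hphase n χ)

lemma eq_pi_sub_of_cos_eq_neg {x y : ℝ} (hx : x ∈ Set.Icc 0 π) (hy : y ∈ Set.Icc 0 π)
    (h : Real.cos y = -Real.cos x) : y = π - x :=
  Real.injOn_cos hy ⟨by linarith [hx.2], by linarith [hx.1]⟩ (by rw [h, Real.cos_pi_sub])

lemma Fintype.sum_eq_zero_of_comp_perm_eq_neg {ι M : Type*} [Fintype ι] [AddCommGroup M]
    [IsAddTorsionFree M] (f : ι → M) (σ : Equiv.Perm ι) (hf : ∀ i, f (σ i) = -f i) :
    ∑ i, f i = 0 := by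
  refine self_eq_neg.mp ?_
  calc ∑ i, f i = ∑ i, f (σ i) := (Equiv.sum_comp σ f).symm
    _ = -∑ i, f i := by simp only [hf, Finset.sum_neg_distrib]

theorem wignerD_columns_orthogonal_general (m : ℕ) (θ φ χ : Fin m → ℝ)
    (hθ : ∀ p, θ p ∈ Set.Icc 0 Real.pi)
    (σ : Equiv.Perm (Fin m)) (hσ : ∀ p, Real.cos (θ (σ p)) = -Real.cos (θ p))
    (k : ℤ) (l₁ l₂ : ℕ) (hl₁ : k.natAbs ≤ l₁) (hl₂ : k.natAbs ≤ l₂) (hodd : Odd (l₁ + l₂)) :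
    ∑ p, (starRingEnd ℂ) (wignerD l₁ k 0 (θ p) (φ p) (χ p)) *
      wignerD l₂ k 0 (θ p) (φ p) (χ p) = 0 := by
  have hsign : (-1 : ℝ) ^ (l₁ - k.natAbs) * (-1 : ℝ) ^ (l₂ - k.natAbs) = -1 := by
    rw [← pow_add, Odd.neg_one_pow]
    rw [Nat.odd_iff] at hodd ⊢
    omega
  refine Fintype.sum_eq_zero_of_comp_perm_eq_neg _ σ fun p => ?_
  rw [conj_wignerD_mul_wignerD, conj_wignerD_mul_wignerD,
    eq_pi_sub_of_cos_eq_neg (hθ p) (hθ (σ p)) (hσ p), wignerd_pi_sub, wignerd_pi_sub,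
    ← Complex.ofReal_neg, Complex.ofReal_inj]
  linear_combination (√((2 * l₁ + 1) / (8 * π ^ 2)) * √((2 * l₂ + 1) / (8 * π ^ 2)) *
    wignerd l₁ k 0 (θ p) * wignerd l₂ k 0 (θ p)) * hsign

/-- for cosine-symmetric elevation samples, two Wigner-D columns with orders
`(k,0)` and degrees `l₁, l₂` with `l₁ + l₂` odd are orthogonal. -/
theorem wignerD_columns_orthogonal (m : ℕ) (θ φ χ : Fin m → ℝ)
    (hθ : ∀ p, θ p ∈ Set.Icc 0 Real.pi) (hφ : ∀ p, φ p ∈ Set.Ico 0 (2 * Real.pi))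
    (hχ : ∀ p, χ p ∈ Set.Ico 0 (2 * Real.pi))
    (σ : Equiv.Perm (Fin m)) (hσ : ∀ p, Real.cos (θ (σ p)) = -Real.cos (θ p))
    (k : ℤ) (l₁ l₂ : ℕ) (hl₁ : k.natAbs ≤ l₁) (hl₂ : k.natAbs ≤ l₂) (hodd : Odd (l₁ + l₂)) :
    ∑ p, (starRingEnd ℂ) (wignerD l₁ k 0 (θ p) (φ p) (χ p)) *
      wignerD l₂ k 0 (θ p) (φ p) (χ p) = 0 :=
  wignerD_columns_orthogonal_general m θ φ χ hθ σ hσ k l₁ l₂ hl₁ hl₂ hodd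
end

section
/- Fix B ≥ 2 and elevations θ_1,…,θ_m ∈ [0,π]. For every choice of azimuths φ_1,…,φ_m ∈ [0,2π) and polarizations χ_1,…,χ_m ∈ [0,2π) for which all columns of the Wigner-D sensing matrix A ∈ ℂ^{m×N}, N = B(2B−1)(2B+1)/3, are nonzero, and for all integers l ≠ r with 0 ≤ l, r ≤ B−1 and all integers k, n with |k|, |n| ≤ min(l,r), the mutual coherence satisfies μ(A) ≥ |Σ_{p=1}^m d_l^{k,n}(cos θ_p) d_r^{k,n}(cos θ_p)| / ((Σ_{p=1}^m d_l^{k,n}(cos θ_p)^2)^{1/2} · (Σ_{p=1}^m d_r^{k,n}(cos θ_p)^2)^{1/2}). -/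
open scoped Real BigOperators

/-!
The columns indexed by `(l, k, n)` and `(r, k, n)` share, at every sample point, the unimodular
phase `e^{-ikφ_p} e^{-inχ_p}`, and are otherwise positive multiples `√((2l+1)/(8π²))`,
`√((2r+1)/(8π²))` of the real vectors `(d_l^{k,n}(cos θ_p))_p` and `(d_r^{k,n}(cos θ_p))_p`.
The normalized inner product is invariant under a common unimodular phase and under nonzero
rescaling of either vector, so for this pair of distinct columns it equals the right-hand side;
the coherence is the supremum of these values, which Cauchy–Schwarz bounds by `1`.
-/

open ComplexConjugate

section CoherenceRatio

variable {m : ℕ}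

noncomputable def coherenceRatio (u v : Fin m → ℂ) : ℝ :=
  ‖∑ p, conj (u p) * v p‖ /
    (√(∑ p, Complex.normSq (u p)) * √(∑ p, Complex.normSq (v p)))

theorem coherenceRatio_le_one (u v : Fin m → ℂ) : coherenceRatio u v ≤ 1 := by
  have hnorm : ∀ w : Fin m → ℂ, √(∑ p, Complex.normSq (w p)) = ‖WithLp.toLp 2 w‖ := by
    intro w
    simp [EuclideanSpace.norm_eq, ← Complex.sq_norm]
  have hinner : ‖∑ p, conj (u p) * v p‖ = ‖inner ℂ (WithLp.toLp 2 u) (WithLp.toLp 2 v)‖ := by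
    simp [PiLp.inner_apply, mul_comm]
  rw [coherenceRatio, hinner, hnorm, hnorm]
  exact div_le_one_of_le₀ (norm_inner_le_norm _ _) (by positivity)

theorem coherenceRatio_le_mutualCoherence {ι : Type*} (A : Matrix (Fin m) ι ℂ) {i j : ι}
    (hij : i ≠ j) : coherenceRatio (fun p => A p i) (fun p => A p j) ≤ mutualCoherence A :=
  le_csSup ⟨1, by rintro _ ⟨i, j, -, rfl⟩; exact coherenceRatio_le_one _ _⟩ ⟨i, j, hij, rfl⟩

theorem coherenceRatio_const_mul (u v : Fin m → ℂ) {c d : ℂ} (hc : c ≠ 0) (hd : d ≠ 0) :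
    coherenceRatio (fun p => c * u p) (fun p => d * v p) = coherenceRatio u v := by
  have hsqrt : ∀ (a : ℂ) (w : Fin m → ℂ),
      √(∑ p, Complex.normSq (a * w p)) = ‖a‖ * √(∑ p, Complex.normSq (w p)) := by
    intro a w
    simp_rw [Complex.normSq_mul, ← Finset.mul_sum, Real.sqrt_mul (Complex.normSq_nonneg a),
      Complex.normSq_eq_norm_sq, Real.sqrt_sq (norm_nonneg a)]
  have hsum : ∑ p, conj (c * u p) * (d * v p) = conj c * d * ∑ p, conj (u p) * v p := by
    simp_rw [Finset.mul_sum, map_mul]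
    exact Finset.sum_congr rfl fun p _ => by ring
  rw [coherenceRatio, coherenceRatio, hsqrt, hsqrt, hsum, norm_mul, norm_mul,
    Complex.norm_conj, mul_mul_mul_comm,
    mul_div_mul_left _ _ (mul_ne_zero (norm_ne_zero_iff.2 hc) (norm_ne_zero_iff.2 hd))]

theorem coherenceRatio_unimodular_mul (u v e : Fin m → ℂ) (he : ∀ p, ‖e p‖ = 1) :
    coherenceRatio (fun p => e p * u p) (fun p => e p * v p) = coherenceRatio u v := by
  have hnormSq : ∀ p, Complex.normSq (e p) = 1 := fun p => by
    rw [Complex.normSq_eq_norm_sq, he, one_pow]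
  have hsum : ∀ p, conj (e p * u p) * (e p * v p) = conj (u p) * v p := fun p => by
    rw [map_mul, mul_mul_mul_comm, ← Complex.normSq_eq_conj_mul_self, hnormSq, Complex.ofReal_one,
      one_mul]
  simp only [coherenceRatio, hsum, Complex.normSq_mul, hnormSq, one_mul]

theorem coherenceRatio_ofReal (a b : Fin m → ℝ) :
    coherenceRatio (fun p => (a p : ℂ)) (fun p => (b p : ℂ)) =
      |∑ p, a p * b p| / (√(∑ p, a p ^ 2) * √(∑ p, b p ^ 2)) := by
  simp only [coherenceRatio, Complex.conj_ofReal, Complex.normSq_ofReal, ← sq,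
    ← Complex.ofReal_mul, ← Complex.ofReal_sum, Complex.norm_real, Real.norm_eq_abs]

end CoherenceRatio

noncomputable def wignerPhase (k n : ℤ) (φ χ : ℝ) : ℂ :=
  Complex.exp (-(Complex.I * k * φ)) * Complex.exp (-(Complex.I * n * χ))

theorem norm_wignerPhase (k n : ℤ) (φ χ : ℝ) : ‖wignerPhase k n φ χ‖ = 1 := by
  simp [wignerPhase, Complex.norm_exp]

theorem wignerD_eq_mul_wignerPhase (l : ℕ) (k n : ℤ) (θ φ χ : ℝ) :
    wignerD l k n θ φ χ =
      (√((2 * l + 1) / (8 * π ^ 2)) : ℝ) * (wignerPhase k n φ χ * (wignerd l k n θ : ℂ)) := by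
  rw [wignerD, wignerPhase]
  ring

theorem wignerD_normalization_ne_zero (l : ℕ) :
    ((√((2 * l + 1) / (8 * π ^ 2)) : ℝ) : ℂ) ≠ 0 :=
  Complex.ofReal_ne_zero.2 (Real.sqrt_pos.2 (by positivity)).ne'

theorem wdMatrix_coherence_lower_bound_general (B m : ℕ)
    (θ φ χ : Fin m → ℝ)
    (l r : ℕ) (hlr : l ≠ r) (hl : l ≤ B - 1) (hr : r ≤ B - 1)
    (k n : ℤ) (hk : k.natAbs ≤ min l r) (hn : n.natAbs ≤ min l r) :
    mutualCoherence (wdMatrix B θ φ χ) ≥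
      |∑ p, wignerd l k n (θ p) * wignerd r k n (θ p)| /
        (Real.sqrt (∑ p, (wignerd l k n (θ p)) ^ 2) *
          Real.sqrt (∑ p, (wignerd r k n (θ p)) ^ 2)) := by
  let i : WDIndex B := ⟨⟨l, by omega⟩, ⟨k, by simp only [Set.mem_Icc]; omega⟩,
    ⟨n, by simp only [Set.mem_Icc]; omega⟩⟩
  let j : WDIndex B := ⟨⟨r, by omega⟩, ⟨k, by simp only [Set.mem_Icc]; omega⟩,
    ⟨n, by simp only [Set.mem_Icc]; omega⟩⟩
  have hij : i ≠ j := fun h => hlr (congrArg (fun x : WDIndex B => x.1.1) h)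
  calc _ = coherenceRatio (fun p => wdMatrix B θ φ χ p i) (fun p => wdMatrix B θ φ χ p j) := by
        simp only [wdMatrix, i, j, wignerD_eq_mul_wignerPhase,
          coherenceRatio_const_mul _ _ (wignerD_normalization_ne_zero l)
            (wignerD_normalization_ne_zero r),
          coherenceRatio_unimodular_mul _ _ _ fun p => norm_wignerPhase k n (φ p) (χ p),
          coherenceRatio_ofReal]
    _ ≤ _ := coherenceRatio_le_mutualCoherence _ hij

/-- lower bound on the mutual coherence of the Wigner-D sensing matrix
in terms of the (fixed) elevation samples only. -/
theorem wdMatrix_coherence_lower_bound (B m : ℕ) (hB : 2 ≤ B)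
    (θ φ χ : Fin m → ℝ)
    (hθ : ∀ p, θ p ∈ Set.Icc 0 Real.pi) (hφ : ∀ p, φ p ∈ Set.Ico 0 (2 * Real.pi))
    (hχ : ∀ p, χ p ∈ Set.Ico 0 (2 * Real.pi))
    (hcols : ∀ i : WDIndex B, ∃ p, wdMatrix B θ φ χ p i ≠ 0)
    (l r : ℕ) (hlr : l ≠ r) (hl : l ≤ B - 1) (hr : r ≤ B - 1)
    (k n : ℤ) (hk : k.natAbs ≤ min l r) (hn : n.natAbs ≤ min l r) :
    mutualCoherence (wdMatrix B θ φ χ) ≥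
      |∑ p, wignerd l k n (θ p) * wignerd r k n (θ p)| /
        (Real.sqrt (∑ p, (wignerd l k n (θ p)) ^ 2) *
          Real.sqrt (∑ p, (wignerd r k n (θ p)) ^ 2)) :=
  wdMatrix_coherence_lower_bound_general B m θ φ χ l r hlr hl hr k n hk hn
end

section
/- Fix B ≥ 4 and elevations θ_1,…,θ_m ∈ [0,π]. Let A_1 be the spherical-harmonic sensing matrix built from (θ_p, φ_p) and A_2 the Wigner-D sensing matrix built from (θ_p, φ_p, χ_p), for any azimuths φ_p and polarizations χ_p such that all columns of A_1 and A_2 are nonzero. Then min{μ(A_1), μ(A_2)} ≥ |Σ_{p=1}^m P_{B−1}(cos θ_p) P_{B−3}(cos θ_p)| / ((Σ_{p=1}^m P_{B−1}(cos θ_p)^2)^{1/2} · (Σ_{p=1}^m P_{B−3}(cos θ_p)^2)^{1/2}), where P_l := P_l^0 is the Legendre polynomial of degree l. -/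
open scoped Real BigOperators

/-!
The zonal columns `(l, 0)` of the spherical-harmonic matrix and `(l, 0, 0)` of the Wigner-D
matrix are nonzero real multiples of the sampled Legendre vector `(P_l(cos θ_p))_p`, because
`Y_l^0 = N_l^0 P_l(cos θ)` and `d_l^{0,0} = P_{l}^{(0,0)} = P_l` (Rodrigues' formula). Rescaling
columns does not change their normalized inner product, so the distinct columns with `l = B - 1`
and `l = B - 3` realize the right-hand side, and the mutual coherence is a supremum of such
values that is bounded above by `1` (Cauchy–Schwarz).
-/

theorem jacobiGamma_zero_zero (a : ℕ) : jacobiGamma a 0 0 = 1 := by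
  simp [jacobiGamma, Nat.factorial_ne_zero]

theorem jacobiP_zero_zero (a : ℕ) (x : ℝ) : jacobiP a 0 0 x = assocLegendre a 0 x := by
  have hflip : (fun y : ℝ => (1 - y) ^ 0 * (1 + y) ^ 0 * (1 - y ^ 2) ^ a) =
      fun y => (-1) ^ a * (y ^ 2 - 1) ^ a := by
    ext y
    rw [pow_zero, pow_zero, one_mul, one_mul, ← mul_pow, neg_one_mul, neg_sub]
  have hsign : ((-1 : ℝ) ^ a) * (-1) ^ a = 1 := by
    rw [← mul_pow, neg_one_mul, neg_neg, one_pow]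
  rw [jacobiP, assocLegendre, hflip, iteratedDeriv_const_mul_field]
  simp only [Nat.cast_zero, neg_zero, zpow_zero, Int.cast_zero, zero_div, Real.rpow_zero, zero_add,
    Int.toNat_natCast, mul_one]
  rw [← mul_assoc, div_mul_eq_mul_div, hsign]

theorem wignerd_zero_zero (l : ℕ) (θ : ℝ) : wignerd l 0 0 θ = assocLegendre l 0 (Real.cos θ) := by
  simp [wignerd, jacobiGamma_zero_zero, jacobiP_zero_zero]

theorem shNormFactor_zero_pos (l : ℕ) : 0 < shNormFactor l 0 := by
  rw [shNormFactor, sub_zero, add_zero, div_self (by positivity), mul_one]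
  positivity

theorem sphericalHarmonic_zero (l : ℕ) (θ φ : ℝ) :
    sphericalHarmonic l 0 θ φ = ((shNormFactor l 0 * assocLegendre l 0 (Real.cos θ) : ℝ) : ℂ) := by
  simp [sphericalHarmonic]

theorem wignerD_zero_zero (l : ℕ) (θ φ χ : ℝ) :
    wignerD l 0 0 θ φ χ =
      ((√((2 * l + 1) / (8 * π ^ 2)) * assocLegendre l 0 (Real.cos θ) : ℝ) : ℂ) := by
  simp [wignerD, wignerd_zero_zero]

theorem norm_sum_conj_mul_le {ι : Type*} (s : Finset ι) (a b : ι → ℂ) :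
    ‖∑ p ∈ s, starRingEnd ℂ (a p) * b p‖ ≤
      √(∑ p ∈ s, Complex.normSq (a p)) * √(∑ p ∈ s, Complex.normSq (b p)) := by
  calc ‖∑ p ∈ s, starRingEnd ℂ (a p) * b p‖ ≤ ∑ p ∈ s, ‖a p‖ * ‖b p‖ :=
        (norm_sum_le _ _).trans_eq (by simp)
    _ ≤ _ := by
        simpa [Complex.normSq_eq_norm_sq] using Real.sum_mul_le_sqrt_mul_sqrt s (‖a ·‖) (‖b ·‖)

section Coherence

variable {m : ℕ} {ι : Type*} (A : Matrix (Fin m) ι ℂ) {i j : ι}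

theorem le_mutualCoherence (hij : i ≠ j) :
    ‖∑ p, starRingEnd ℂ (A p i) * A p j‖ /
        (√(∑ p, Complex.normSq (A p i)) * √(∑ p, Complex.normSq (A p j))) ≤
      mutualCoherence A := by
  refine le_csSup ⟨1, ?_⟩ ⟨i, j, hij, rfl⟩
  rintro x ⟨i', j', -, rfl⟩
  exact div_le_one_of_le₀ (norm_sum_conj_mul_le _ _ _) (by positivity)

theorem le_mutualCoherence_of_real_columns (hij : i ≠ j) {f g : Fin m → ℝ} {c d : ℝ}
    (hc : c ≠ 0) (hd : d ≠ 0) (hi : ∀ p, A p i = ((c * f p : ℝ) : ℂ))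
    (hj : ∀ p, A p j = ((d * g p : ℝ) : ℂ)) :
    |∑ p, f p * g p| / (√(∑ p, f p ^ 2) * √(∑ p, g p ^ 2)) ≤ mutualCoherence A := by
  convert le_mutualCoherence A hij using 1
  have hinner : ∑ p, starRingEnd ℂ (A p i) * A p j = ((c * d * ∑ p, f p * g p : ℝ) : ℂ) := by
    simp only [hi, hj, Complex.conj_ofReal, Finset.mul_sum]
    push_cast
    exact Finset.sum_congr rfl fun p _ => by ring
  have hnorm : ∀ (e : ℝ) (v : Fin m → ℝ),
      ∑ p, Complex.normSq ((e * v p : ℝ) : ℂ) = e ^ 2 * ∑ p, v p ^ 2 := by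
    intro e v
    simp only [Complex.normSq_ofReal, Finset.mul_sum]
    exact Finset.sum_congr rfl fun p _ => by ring
  rw [hinner]
  simp only [hi, hj, hnorm, Complex.norm_real, Real.norm_eq_abs, abs_mul,
    Real.sqrt_mul (sq_nonneg _), Real.sqrt_sq_eq_abs]
  rw [mul_mul_mul_comm, mul_div_mul_left _ _ (by positivity)]

end Coherence

theorem min_coherence_lower_bound_general (B m : ℕ) (hB : 4 ≤ B)
    (θ φ χ : Fin m → ℝ) :
    min (mutualCoherence (shMatrix B θ φ)) (mutualCoherence (wdMatrix B θ φ χ)) ≥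
      |∑ p, assocLegendre (B - 1) 0 (Real.cos (θ p)) * assocLegendre (B - 3) 0 (Real.cos (θ p))| /
        (Real.sqrt (∑ p, (assocLegendre (B - 1) 0 (Real.cos (θ p))) ^ 2) *
          Real.sqrt (∑ p, (assocLegendre (B - 3) 0 (Real.cos (θ p))) ^ 2)) := by
  set P := fun (l : ℕ) (p : Fin m) => assocLegendre l 0 (Real.cos (θ p))
  have hzero (l : ℕ) : (0 : ℤ) ∈ Set.Icc (-(l : ℤ)) l := by simp
  have hdistinct : B - 1 ≠ B - 3 := by omega
  have hwd_ne (l : ℕ) : √((2 * l + 1) / (8 * π ^ 2)) ≠ 0 := by positivity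
  refine le_min ?_ ?_
  · exact le_mutualCoherence_of_real_columns (shMatrix B θ φ)
      (i := ⟨⟨B - 1, by omega⟩, ⟨0, hzero _⟩⟩) (j := ⟨⟨B - 3, by omega⟩, ⟨0, hzero _⟩⟩)
      (fun h => hdistinct (congrArg (fun x => x.1.1) h)) (f := P (B - 1)) (g := P (B - 3))
      (shNormFactor_zero_pos _).ne' (shNormFactor_zero_pos _).ne'
      (fun p => sphericalHarmonic_zero _ _ _) (fun p => sphericalHarmonic_zero _ _ _)
  · exact le_mutualCoherence_of_real_columns (wdMatrix B θ φ χ)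
      (i := ⟨⟨B - 1, by omega⟩, ⟨0, hzero _⟩, ⟨0, hzero _⟩⟩)
      (j := ⟨⟨B - 3, by omega⟩, ⟨0, hzero _⟩, ⟨0, hzero _⟩⟩)
      (fun h => hdistinct (congrArg (fun x => x.1.1) h)) (f := P (B - 1)) (g := P (B - 3))
      (hwd_ne _) (hwd_ne _) (fun p => wignerD_zero_zero _ _ _ _) (fun p => wignerD_zero_zero _ _ _ _)

/-- the minimum of the mutual coherences of the spherical-harmonic and Wigner-D
sensing matrices is lower bounded via the Legendre polynomials of degrees `B-1` and `B-3`. -/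
theorem min_coherence_lower_bound (B m : ℕ) (hB : 4 ≤ B)
    (θ φ χ : Fin m → ℝ)
    (hθ : ∀ p, θ p ∈ Set.Icc 0 Real.pi) (hφ : ∀ p, φ p ∈ Set.Ico 0 (2 * Real.pi))
    (hχ : ∀ p, χ p ∈ Set.Ico 0 (2 * Real.pi))
    (hcols₁ : ∀ i : SHIndex B, ∃ p, shMatrix B θ φ p i ≠ 0)
    (hcols₂ : ∀ i : WDIndex B, ∃ p, wdMatrix B θ φ χ p i ≠ 0) :
    min (mutualCoherence (shMatrix B θ φ)) (mutualCoherence (wdMatrix B θ φ χ)) ≥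
      |∑ p, assocLegendre (B - 1) 0 (Real.cos (θ p)) * assocLegendre (B - 3) 0 (Real.cos (θ p))| /
        (Real.sqrt (∑ p, (assocLegendre (B - 1) 0 (Real.cos (θ p))) ^ 2) *
          Real.sqrt (∑ p, (assocLegendre (B - 3) 0 (Real.cos (θ p))) ^ 2)) :=
  min_coherence_lower_bound_general B m hB θ φ χ
end

section
/- The functions (sin θ)^{1/2} D_l^{k,n}(θ, φ, χ) are orthonormal with respect to the measure dθ dφ dχ on [0,π]×[0,2π]×[0,2π]; equivalently, for all integers l, l' ≥ 0, −l ≤ k, n ≤ l, and −l' ≤ k', n' ≤ l', ∫_0^{2π} ∫_0^{2π} ∫_0^{π} D_l^{k,n}(θ,φ,χ) · conj(D_{l'}^{k',n'}(θ,φ,χ)) · sin θ dθ dφ dχ = δ_{l l'} δ_{k k'} δ_{n n'}. -/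
open scoped Real BigOperators

/-!
The φ- and χ-integrals are Fourier orthogonality on `[0, 2π]`, which forces `k = k'` and
`n = n'`. For fixed `k, n` the substitution `x = cos θ`, together with
`sin² (θ/2) = (1 - x)/2` and `cos² (θ/2) = (1 + x)/2`, turns the θ-integral into
`∫₋₁¹ (1 - x)^ξ (1 + x)^λ P_α P_α'`, where `α - α' = l - l'`: orthogonality of Jacobi polynomials.
By Rodrigues' formula `(1 - x)^ξ (1 + x)^λ P_α` is a multiple of the `α`-th derivative of
`(1 - x)^(ξ+α) (1 + x)^(λ+α)`, whose lower derivatives vanish at `±1`; so `α` integrations by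
parts move every derivative onto the other factor. This kills all polynomials of degree `< α`
and reduces the norm to a Beta integral, which `γ` normalises.
-/

open Polynomial Real

-- Closed before the Wigner part, where `φ` is a variable and not `Nat.totient`.
section

open Nat

namespace Polynomial

theorem iteratedDeriv_eval {𝕜 : Type*} [NontriviallyNormedField 𝕜] (p : 𝕜[X]) (n : ℕ) :
    iteratedDeriv n (fun x => p.eval x) = fun x => (derivative^[n] p).eval x := by
  induction n with
  | zero => simp
  | succ n ih =>
    rw [iteratedDeriv_succ, ih, Function.iterate_succ_apply']
    funext x
    exact Polynomial.deriv _

theorem integral_derivative_mul_eq_neg {a b : ℝ} (p q : ℝ[X])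
    (ha : p.eval a * q.eval a = 0) (hb : p.eval b * q.eval b = 0) :
    ∫ x in a..b, (derivative p).eval x * q.eval x =
      -∫ x in a..b, p.eval x * (derivative q).eval x := by
  have h := intervalIntegral.integral_deriv_mul_eq_sub (fun x _ => p.hasDerivAt x)
    (fun x _ => q.hasDerivAt x) ((derivative p).continuous.intervalIntegrable a b)
    ((derivative q).continuous.intervalIntegrable a b)
  rw [ha, hb, sub_zero, intervalIntegral.integral_add
    (by apply Continuous.intervalIntegrable; fun_prop)
    (by apply Continuous.intervalIntegrable; fun_prop)] at h
  linarith

theorem integral_iterate_derivative_mul_eq {a b : ℝ} (n : ℕ) {p : ℝ[X]}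
    (hp : ∀ j < n, (derivative^[j] p).eval a = 0 ∧ (derivative^[j] p).eval b = 0) (q : ℝ[X]) :
    ∫ x in a..b, (derivative^[n] p).eval x * q.eval x =
      (-1) ^ n * ∫ x in a..b, p.eval x * (derivative^[n] q).eval x := by
  induction n generalizing p with
  | zero => simp
  | succ n ih =>
    have hp' : ∀ j < n, (derivative^[j] (derivative p)).eval a = 0 ∧
        (derivative^[j] (derivative p)).eval b = 0 := fun j hj => hp (j + 1) (by omega)
    obtain ⟨hpa, hpb⟩ : p.eval a = 0 ∧ p.eval b = 0 := hp 0 n.succ_pos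
    rw [Function.iterate_succ_apply, ih hp', integral_derivative_mul_eq_neg _ _
      (by simp [hpa]) (by simp [hpb]),
      ← Function.iterate_succ_apply' derivative, pow_succ]
    ring

theorem iterate_derivative_eq_C_of_natDegree_le {R : Type*} [Semiring R] {q : R[X]} {n : ℕ}
    (hq : q.natDegree ≤ n) : derivative^[n] q = C (n ! * q.coeff n) := by
  rw [eq_C_of_natDegree_le_zero ((natDegree_iterate_derivative q n).trans (by omega)),
    coeff_iterate_derivative, zero_add, descFactorial_self, nsmul_eq_mul]

end Polynomial

theorem integral_one_sub_pow_mul_one_add_pow (m p : ℕ) :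
    ∫ x in (-1 : ℝ)..1, (1 - x) ^ m * (1 + x) ^ p = 2 ^ (m + p + 1) * m ! * p ! / (m + p + 1)! := by
  induction m generalizing p with
  | zero =>
    simp only [pow_zero, one_mul, zero_add]
    rw [intervalIntegral.integral_comp_add_left (fun x => x ^ p), integral_pow, factorial_succ]
    push_cast
    field_simp
    norm_num
  | succ m ih =>
    have hparts := integral_derivative_mul_eq_neg (a := -1) (b := 1) ((1 - X) ^ (m + 1))
      ((1 + X) ^ (p + 1)) (by simp) (by simp)
    simp only [derivative_pow, derivative_sub, derivative_add, derivative_one, derivative_X,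
      eval_mul, eval_pow, eval_sub, eval_add, eval_one, eval_X, eval_C, eval_neg, zero_sub, zero_add,
      Nat.add_sub_cancel, mul_neg, neg_mul, mul_one, mul_assoc, mul_left_comm _ ((p + 1 : ℕ) : ℝ),
      intervalIntegral.integral_neg, neg_inj, intervalIntegral.integral_const_mul] at hparts
    apply mul_left_cancel₀ (show ((p + 1 : ℕ) : ℝ) ≠ 0 by positivity)
    rw [← hparts, ih, show m + (p + 1) + 1 = m + 1 + p + 1 by ring, factorial_succ m,
      factorial_succ p]
    push_cast
    field_simp

theorem integral_comp_cos_mul_sin {g : ℝ → ℝ} (hg : Continuous g) :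
    ∫ θ in (0 : ℝ)..π, g (cos θ) * sin θ = ∫ x in (-1 : ℝ)..1, g x := by
  have h := intervalIntegral.integral_comp_mul_deriv (a := 0) (b := π) (fun θ _ => hasDerivAt_cos θ)
    continuous_sin.neg.continuousOn hg
  simp only [Function.comp_def, cos_zero, cos_pi, mul_neg, intervalIntegral.integral_neg,
    intervalIntegral.integral_symm (-1 : ℝ)] at h
  exact neg_inj.mp h

theorem integral_exp_int_mul_I (m : ℤ) :
    ∫ x in (0 : ℝ)..2 * π, Complex.exp (Complex.I * m * x) = if m = 0 then 2 * (π : ℂ) else 0 := by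
  split_ifs with hm
  · simp [hm]
  · have hc : Complex.I * m ≠ 0 := mul_ne_zero Complex.I_ne_zero (by exact_mod_cast hm)
    rw [integral_exp_mul_complex hc]
    have : Complex.I * m * (2 * π) = m * (2 * π * Complex.I) := by ring
    simp [this, Complex.exp_int_mul_two_pi_mul_I]

theorem natDegree_one_sub_X_pow_mul_one_add_X_pow (m p : ℕ) :
    ((1 - X : ℝ[X]) ^ m * (1 + X) ^ p).natDegree = m + p := by
  compute_degree!

theorem leadingCoeff_one_sub_X_pow_mul_one_add_X_pow (m p : ℕ) :
    ((1 - X : ℝ[X]) ^ m * (1 + X) ^ p).leadingCoeff = (-1) ^ m := by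
  have h₁ : (1 - X : ℝ[X]).leadingCoeff = -1 := by
    rw [leadingCoeff, show (1 - X : ℝ[X]).natDegree = 1 by compute_degree!]
    simp [coeff_one]
  have h₂ : (1 + X : ℝ[X]).leadingCoeff = 1 := by
    rw [add_comm, ← C_1, leadingCoeff_X_add_C]
  rw [leadingCoeff_mul, leadingCoeff_pow, leadingCoeff_pow, h₁, h₂, one_pow, mul_one]

theorem isCoprime_one_sub_X_one_add_X : IsCoprime (1 - X : ℝ[X]) (1 + X) :=
  ⟨C (1 / 2), C (1 / 2), by rw [← mul_add, sub_add_add_cancel, ← C_1, ← C_add, ← C_mul]; norm_num⟩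

noncomputable def jacobiWeight (ξ lam : ℕ) : ℝ[X] := (1 - X) ^ ξ * (1 + X) ^ lam

noncomputable def jacobiRodrigues (a ξ lam : ℕ) : ℝ[X] := jacobiWeight ξ lam * (1 - X ^ 2) ^ a

-- `jacobiP` as a polynomial: the division is exact (`jacobiWeight_dvd_iterate_derivative`), and
-- the two agree off `±1`, where the negative powers in `jacobiP` take junk values.
noncomputable def jacobiPoly (a ξ lam : ℕ) : ℝ[X] :=
  C ((-1 : ℝ) ^ a / (2 ^ a * a !)) *
    (derivative^[a] (jacobiRodrigues a ξ lam) / jacobiWeight ξ lam)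

section Jacobi

variable (a ξ lam : ℕ)

theorem jacobiWeight_ne_zero : jacobiWeight ξ lam ≠ 0 := by
  rw [jacobiWeight, ← leadingCoeff_ne_zero, leadingCoeff_one_sub_X_pow_mul_one_add_X_pow]
  exact pow_ne_zero _ (by norm_num)

theorem natDegree_jacobiWeight : (jacobiWeight ξ lam).natDegree = ξ + lam :=
  natDegree_one_sub_X_pow_mul_one_add_X_pow ξ lam

theorem jacobiRodrigues_eq :
    jacobiRodrigues a ξ lam = (1 - X) ^ (ξ + a) * (1 + X) ^ (lam + a) := by
  have h : (1 - X ^ 2 : ℝ[X]) = (1 - X) * (1 + X) := by ring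
  rw [jacobiRodrigues, jacobiWeight, h, mul_pow, pow_add, pow_add]
  ring

theorem jacobiWeight_dvd_iterate_derivative :
    jacobiWeight ξ lam ∣ derivative^[a] (jacobiRodrigues a ξ lam) := by
  have h₁ := pow_sub_dvd_iterate_derivative_of_pow_dvd a
    (dvd_mul_right ((1 - X : ℝ[X]) ^ (ξ + a)) ((1 + X) ^ (lam + a)))
  have h₂ := pow_sub_dvd_iterate_derivative_of_pow_dvd a
    (dvd_mul_left ((1 + X : ℝ[X]) ^ (lam + a)) ((1 - X) ^ (ξ + a)))
  rw [Nat.add_sub_cancel, ← jacobiRodrigues_eq] at h₁ h₂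
  exact isCoprime_one_sub_X_one_add_X.pow.mul_dvd h₁ h₂

theorem eval_iterate_derivative_jacobiRodrigues_of_lt {j : ℕ} (hj : j < a) :
    (derivative^[j] (jacobiRodrigues a ξ lam)).eval (-1) = 0 ∧
      (derivative^[j] (jacobiRodrigues a ξ lam)).eval 1 = 0 := by
  obtain ⟨r, hr⟩ := pow_sub_dvd_iterate_derivative_of_pow_dvd j
    (dvd_mul_left ((1 + X : ℝ[X]) ^ (lam + a)) ((1 - X) ^ (ξ + a)))
  obtain ⟨s, hs⟩ := pow_sub_dvd_iterate_derivative_of_pow_dvd j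
    (dvd_mul_right ((1 - X : ℝ[X]) ^ (ξ + a)) ((1 + X) ^ (lam + a)))
  rw [← jacobiRodrigues_eq] at hr hs
  constructor
  · rw [hr]; simp [zero_pow (show lam + a - j ≠ 0 by omega)]
  · rw [hs]; simp [zero_pow (show ξ + a - j ≠ 0 by omega)]

theorem jacobiWeight_mul_jacobiPoly :
    jacobiWeight ξ lam * jacobiPoly a ξ lam =
      C ((-1 : ℝ) ^ a / (2 ^ a * a !)) * derivative^[a] (jacobiRodrigues a ξ lam) := by
  rw [jacobiPoly, mul_left_comm, EuclideanDomain.mul_div_cancel' (jacobiWeight_ne_zero ξ lam)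
    (jacobiWeight_dvd_iterate_derivative a ξ lam)]

theorem natDegree_jacobiPoly_le : (jacobiPoly a ξ lam).natDegree ≤ a := by
  rcases eq_or_ne (jacobiPoly a ξ lam) 0 with h | h
  · simp [h]
  have hdeg := congrArg natDegree (jacobiWeight_mul_jacobiPoly a ξ lam)
  rw [natDegree_mul (jacobiWeight_ne_zero ξ lam) h, jacobiWeight,
    natDegree_one_sub_X_pow_mul_one_add_X_pow] at hdeg
  have hR : (jacobiRodrigues a ξ lam).natDegree = ξ + a + (lam + a) := by
    rw [jacobiRodrigues_eq, natDegree_one_sub_X_pow_mul_one_add_X_pow]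
  have := (natDegree_C_mul_le ((-1 : ℝ) ^ a / (2 ^ a * a !)) _).trans
    (natDegree_iterate_derivative (jacobiRodrigues a ξ lam) a)
  omega

theorem coeff_jacobiPoly_self :
    (jacobiPoly a ξ lam).coeff a = (ξ + lam + 2 * a)! / ((ξ + lam + a)! * 2 ^ a * a !) := by
  have hW : (jacobiWeight ξ lam).coeff (ξ + lam) = (-1) ^ ξ := by
    have := leadingCoeff_one_sub_X_pow_mul_one_add_X_pow ξ lam
    rwa [leadingCoeff, natDegree_one_sub_X_pow_mul_one_add_X_pow] at this
  have hR : (jacobiRodrigues a ξ lam).coeff (ξ + lam + a + a) = (-1) ^ ξ * (-1) ^ a := by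
    have := leadingCoeff_one_sub_X_pow_mul_one_add_X_pow (ξ + a) (lam + a)
    rwa [leadingCoeff, natDegree_one_sub_X_pow_mul_one_add_X_pow, ← jacobiRodrigues_eq,
      show ξ + a + (lam + a) = ξ + lam + a + a by ring, pow_add] at this
  have hdesc : ((ξ + lam + a + a).descFactorial a : ℝ) * (ξ + lam + a)! = (ξ + lam + 2 * a)! := by
    have := Nat.factorial_mul_descFactorial (show a ≤ ξ + lam + a + a by omega)
    rw [Nat.add_sub_cancel] at this
    rw [show ξ + lam + 2 * a = ξ + lam + a + a by ring, ← this]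
    push_cast
    ring
  have hcoeff := congrArg (coeff · (ξ + lam + a)) (jacobiWeight_mul_jacobiPoly a ξ lam)
  rw [coeff_mul_add_eq_of_natDegree_le (natDegree_jacobiWeight ξ lam).le
    (natDegree_jacobiPoly_le a ξ lam), hW, coeff_C_mul, coeff_iterate_derivative, nsmul_eq_mul,
    hR] at hcoeff
  rw [← hdesc]
  rcases neg_one_pow_eq_or ℝ ξ with hξ | hξ <;> rcases neg_one_pow_eq_or ℝ a with ha | ha <;>
    rw [hξ, ha] at hcoeff <;> field_simp at hcoeff ⊢ <;> linarith

theorem integral_jacobiWeight_mul_jacobiPoly_mul {q : ℝ[X]} (hq : q.natDegree ≤ a) :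
    ∫ x in (-1 : ℝ)..1, (jacobiWeight ξ lam * jacobiPoly a ξ lam * q).eval x =
      q.coeff a / 2 ^ a * ∫ x in (-1 : ℝ)..1, (1 - x) ^ (ξ + a) * (1 + x) ^ (lam + a) := by
  simp only [jacobiWeight_mul_jacobiPoly, eval_mul, eval_C, mul_assoc,
    intervalIntegral.integral_const_mul]
  rw [integral_iterate_derivative_mul_eq a
    (fun j hj => eval_iterate_derivative_jacobiRodrigues_of_lt a ξ lam hj),
    iterate_derivative_eq_C_of_natDegree_le hq]
  simp only [eval_C, jacobiRodrigues_eq, eval_mul, eval_pow, eval_sub, eval_add, eval_one, eval_X,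
    intervalIntegral.integral_mul_const]
  have hsq : (-1 : ℝ) ^ a * (-1) ^ a = 1 := by rw [← mul_pow]; norm_num
  field_simp
  linear_combination (q.coeff a * ∫ x in (-1 : ℝ)..1, (1 - x) ^ (ξ + a) * (1 + x) ^ (lam + a)) * hsq

theorem jacobiP_eq_eval_jacobiPoly {x : ℝ} (h₁ : x ≠ 1) (h₂ : x ≠ -1) :
    jacobiP a ξ lam x = (jacobiPoly a ξ lam).eval x := by
  have hR : (fun y : ℝ => (1 - y) ^ ξ * (1 + y) ^ lam * (1 - y ^ 2) ^ a) =
      fun y => (jacobiRodrigues a ξ lam).eval y := by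
    simp [jacobiRodrigues, jacobiWeight]
  have hW := congrArg (eval x) (jacobiWeight_mul_jacobiPoly a ξ lam)
  simp only [jacobiWeight, eval_mul, eval_pow, eval_sub, eval_add, eval_one, eval_X, eval_C] at hW
  have h₁' : 1 - x ≠ 0 := sub_ne_zero.mpr h₁.symm
  have h₂' : 1 + x ≠ 0 := fun h => h₂ (by linarith)
  rw [jacobiP, hR, iteratedDeriv_eval, zpow_neg, zpow_neg, zpow_natCast, zpow_natCast]
  field_simp at hW ⊢
  linear_combination -hW

end Jacobi

theorem integral_jacobiWeight_mul_jacobiPoly_mul_jacobiPoly (a b ξ lam : ℕ) :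
    ∫ x in (-1 : ℝ)..1, (jacobiWeight ξ lam * jacobiPoly a ξ lam * jacobiPoly b ξ lam).eval x =
      if a = b then 2 ^ (ξ + lam + 1) / ((2 * a + ξ + lam + 1) * jacobiGamma a ξ lam) else 0 := by
  wlog hba : b ≤ a generalizing a b
  · rw [mul_right_comm, this b a (by omega)]
    by_cases hab : a = b
    · subst hab; rfl
    · rw [if_neg hab, if_neg (Ne.symm hab)]
  rw [integral_jacobiWeight_mul_jacobiPoly_mul a ξ lam ((natDegree_jacobiPoly_le b ξ lam).trans hba)]
  rcases hba.lt_or_eq with hlt | rfl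
  · rw [coeff_eq_zero_of_natDegree_lt ((natDegree_jacobiPoly_le b ξ lam).trans_lt hlt),
      if_neg hlt.ne', zero_div, zero_mul]
  rw [if_pos rfl, coeff_jacobiPoly_self, integral_one_sub_pow_mul_one_add_pow, jacobiGamma,
    show ξ + b + (lam + b) + 1 = ξ + lam + 2 * b + 1 by ring, factorial_succ,
    show b + ξ + lam = ξ + lam + b by ring, add_comm b ξ, add_comm b lam]
  push_cast
  field_simp
  ring

theorem eval_cos_jacobiWeight (ξ lam : ℕ) (θ : ℝ) :
    (jacobiWeight ξ lam).eval (cos θ) = 2 ^ (ξ + lam) * (sin (θ / 2) ^ ξ * cos (θ / 2) ^ lam) ^ 2 := by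
  have hs : 1 - cos θ = 2 * sin (θ / 2) ^ 2 := by
    rw [sin_sq, cos_sq, mul_div_cancel₀ θ two_ne_zero]; ring
  have hc : 1 + cos θ = 2 * cos (θ / 2) ^ 2 := by
    rw [cos_sq, mul_div_cancel₀ θ two_ne_zero]; ring
  simp only [jacobiWeight, eval_mul, eval_pow, eval_sub, eval_add, eval_one, eval_X, hs, hc]
  ring

theorem jacobiGamma_pos (a ξ lam : ℕ) : 0 < jacobiGamma a ξ lam := by
  unfold jacobiGamma; positivity

theorem wignerd_mul_wignerd_mul_sin {ξ lam : ℕ} (l l' : ℕ) {k n : ℤ} (hξ : ξ = (k - n).natAbs)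
    (hlam : lam = (k + n).natAbs) (θ : ℝ) :
    wignerd l k n θ * wignerd l' k n θ * sin θ =
      √(jacobiGamma (l - (ξ + lam) / 2) ξ lam) * √(jacobiGamma (l' - (ξ + lam) / 2) ξ lam) /
        2 ^ (ξ + lam) * (jacobiWeight ξ lam * jacobiPoly (l - (ξ + lam) / 2) ξ lam *
          jacobiPoly (l' - (ξ + lam) / 2) ξ lam).eval (cos θ) * sin θ := by
  rcases eq_or_ne (sin θ) 0 with h0 | h0
  · rw [h0, mul_zero, mul_zero]
  have hcos : cos θ ^ 2 ≠ 1 := fun h =>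
    h0 (pow_eq_zero_iff two_ne_zero |>.mp (by linarith [sin_sq_add_cos_sq θ]))
  have h₁ : cos θ ≠ 1 := fun h => hcos (by rw [h]; norm_num)
  have h₂ : cos θ ≠ -1 := fun h => hcos (by rw [h]; norm_num)
  have hω : (if k ≤ n then (1 : ℝ) else (-1) ^ (n - k)) ^ 2 = 1 := by
    split_ifs
    · norm_num
    · rw [← zpow_natCast, ← zpow_mul, mul_comm, zpow_mul]; norm_num
  have h2 : (2 : ℝ) ^ (ξ + lam) * (2 ^ (ξ + lam))⁻¹ = 1 := mul_inv_cancel₀ (by positivity)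
  simp only [wignerd]
  rw [← hξ, ← hlam]
  set a := l - (ξ + lam) / 2
  set a' := l' - (ξ + lam) / 2
  rw [jacobiP_eq_eval_jacobiPoly _ _ _ h₁ h₂, jacobiP_eq_eval_jacobiPoly _ _ _ h₁ h₂]
  simp only [eval_mul, eval_cos_jacobiWeight]
  linear_combination (√(jacobiGamma a ξ lam) * √(jacobiGamma a' ξ lam) *
    (sin (θ / 2) ^ ξ * cos (θ / 2) ^ lam) ^ 2 * (jacobiPoly a ξ lam).eval (cos θ) *
    (jacobiPoly a' ξ lam).eval (cos θ) * sin θ) * (hω - h2)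

theorem integral_wignerd_mul_wignerd_mul_sin (l l' : ℕ) (k n : ℤ)
    (hl : k.natAbs ≤ l ∧ n.natAbs ≤ l) (hl' : k.natAbs ≤ l' ∧ n.natAbs ≤ l') :
    ∫ θ in (0 : ℝ)..π, wignerd l k n θ * wignerd l' k n θ * sin θ =
      if l = l' then 2 / (2 * (l : ℝ) + 1) else 0 := by
  set ξ := (k - n).natAbs with hξ
  set lam := (k + n).natAbs with hlam
  set a := l - (ξ + lam) / 2
  set a' := l' - (ξ + lam) / 2
  set g : ℝ → ℝ := fun x => √(jacobiGamma a ξ lam) * √(jacobiGamma a' ξ lam) / 2 ^ (ξ + lam) *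
    (jacobiWeight ξ lam * jacobiPoly a ξ lam * jacobiPoly a' ξ lam).eval x
  rw [intervalIntegral.integral_congr (g := fun θ => g (cos θ) * sin θ)
      fun θ _ => wignerd_mul_wignerd_mul_sin l l' hξ hlam θ,
    integral_comp_cos_mul_sin (by fun_prop), intervalIntegral.integral_const_mul,
    integral_jacobiWeight_mul_jacobiPoly_mul_jacobiPoly]
  have h2a : 2 * a + ξ + lam = 2 * l := by omega
  by_cases hll : l = l'
  · subst hll
    rw [if_pos rfl, if_pos rfl, ← sq, sq_sqrt (jacobiGamma_pos a ξ lam).le]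
    have hl : (2 * a + ξ + lam + 1 : ℝ) = 2 * l + 1 := by exact_mod_cast congrArg (· + 1) h2a
    rw [hl, pow_succ]
    field_simp [(jacobiGamma_pos a ξ lam).ne']
  · rw [if_neg (by omega), if_neg hll, mul_zero]

end

open ComplexConjugate

theorem wignerD_mul_conj_wignerD_mul_sin (l l' : ℕ) (k n k' n' : ℤ) (θ φ χ : ℝ) :
    wignerD l k n θ φ χ * conj (wignerD l' k' n' θ φ χ) * (sin θ : ℂ) =
      Complex.exp (Complex.I * (k' - k : ℤ) * φ) * Complex.exp (Complex.I * (n' - n : ℤ) * χ) *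
        ((√((2 * l + 1) / (8 * π ^ 2)) * √((2 * l' + 1) / (8 * π ^ 2)) *
          (wignerd l k n θ * wignerd l' k' n' θ * sin θ) : ℝ) : ℂ) := by
  simp only [wignerD, map_mul, ← Complex.exp_conj, map_neg, Complex.conj_I, Complex.conj_ofReal,
    map_intCast]
  rw [show Complex.I * (k' - k : ℤ) * φ = -(Complex.I * k * φ) + -(-Complex.I * k' * φ) by
      push_cast; ring,
    show Complex.I * (n' - n : ℤ) * χ = -(Complex.I * n * χ) + -(-Complex.I * n' * χ) by
      push_cast; ring,
    Complex.exp_add, Complex.exp_add]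
  push_cast
  ring

theorem integral_wignerD_mul_conj_wignerD_mul_sin (l l' : ℕ) (k n k' n' : ℤ) :
    ∫ χ in (0 : ℝ)..2 * π, ∫ φ in (0 : ℝ)..2 * π, ∫ θ in (0 : ℝ)..π,
        wignerD l k n θ φ χ * conj (wignerD l' k' n' θ φ χ) * (sin θ : ℂ) =
      (∫ φ in (0 : ℝ)..2 * π, Complex.exp (Complex.I * (k' - k : ℤ) * φ)) *
        (∫ χ in (0 : ℝ)..2 * π, Complex.exp (Complex.I * (n' - n : ℤ) * χ)) *
        ((√((2 * l + 1) / (8 * π ^ 2)) * √((2 * l' + 1) / (8 * π ^ 2)) *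
          ∫ θ in (0 : ℝ)..π, wignerd l k n θ * wignerd l' k' n' θ * sin θ : ℝ) : ℂ) := by
  simp only [wignerD_mul_conj_wignerD_mul_sin, intervalIntegral.integral_const_mul,
    intervalIntegral.integral_ofReal, intervalIntegral.integral_mul_const]

/-- orthonormality of Wigner D-functions with respect to `sin θ dθ dφ dχ` on
`[0,π]×[0,2π]×[0,2π]`. -/
theorem wignerD_orthonormal (l l' : ℕ) (k n k' n' : ℤ)
    (hk₁ : -(l : ℤ) ≤ k) (hk₂ : k ≤ (l : ℤ)) (hn₁ : -(l : ℤ) ≤ n) (hn₂ : n ≤ (l : ℤ))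
    (hk₁' : -(l' : ℤ) ≤ k') (hk₂' : k' ≤ (l' : ℤ)) (hn₁' : -(l' : ℤ) ≤ n') (hn₂' : n' ≤ (l' : ℤ)) :
    (∫ χ in (0 : ℝ)..(2 * Real.pi), ∫ φ in (0 : ℝ)..(2 * Real.pi), ∫ θ in (0 : ℝ)..Real.pi,
        wignerD l k n θ φ χ * (starRingEnd ℂ) (wignerD l' k' n' θ φ χ) * ((Real.sin θ : ℝ) : ℂ)) =
      if l = l' ∧ k = k' ∧ n = n' then 1 else 0 := by
  rw [integral_wignerD_mul_conj_wignerD_mul_sin, integral_exp_int_mul_I, integral_exp_int_mul_I]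
  by_cases hkn : k = k' ∧ n = n'
  · obtain ⟨rfl, rfl⟩ := hkn
    rw [integral_wignerd_mul_wignerd_mul_sin l l' k n ⟨by omega, by omega⟩ ⟨by omega, by omega⟩]
    by_cases hll : l = l'
    · subst hll
      have hnorm : (2 * l + 1) / (8 * π ^ 2) * (2 / (2 * l + 1)) = 1 / (2 * π) ^ 2 := by
        field_simp
        ring
      simp only [sub_self, and_self, ↓reduceIte]
      rw [mul_self_sqrt (by positivity), hnorm]
      push_cast
      field_simp
    · simp [hll]
  · have : k' - k ≠ 0 ∨ n' - n ≠ 0 := by omega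
    rcases this with h | h <;> simp [h, hkn]
end

section
/- For all integers l ≥ 0 and all integers k with −l ≤ k ≤ l, the spherical harmonics satisfy |Y_l^k(θ, φ)| ≤ sqrt((2l+1)/(4π)) for all θ ∈ [0,π] and φ ∈ [0,2π); moreover this bound is attained, since Y_l^0(0, φ) = sqrt((2l+1)/(4π)) for every φ. -/
open scoped Real BigOperators

namespace SHbound
open Polynomial

noncomputable def w (l : ℕ) : ℝ[X] := (X ^ 2 - 1) ^ l

noncomputable def u (l m : ℕ) : ℝ[X] := derivative^[l + m] (w l)

lemma derivative_u (l m : ℕ) : derivative (u l m) = u l (m + 1) := by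
  rw [u, u, ← add_assoc, Function.iterate_succ_apply' derivative]

lemma natDegree_w (l : ℕ) : (w l).natDegree ≤ 2 * l := by
  calc (w l).natDegree ≤ l * (X ^ 2 - 1 : ℝ[X]).natDegree := natDegree_pow_le
  _ ≤ l * 2 := by
      gcongr
      exact (natDegree_sub_le _ _).trans (by simp)
  _ = 2 * l := by ring

lemma u_top (l : ℕ) : u l (l + 1) = 0 := by
  apply iterate_derivative_eq_zero
  have := natDegree_w l
  omega

lemma iter_succ' (k : ℕ) (q : ℝ[X]) :
    derivative (derivative^[k] q) = derivative^[k + 1] q :=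
  (Function.iterate_succ_apply' derivative k q).symm

lemma itd_X_mul (q : ℝ[X]) (n : ℕ) :
    derivative^[n + 1] (X * q) = X * derivative^[n + 1] q + C ((n : ℝ) + 1) * derivative^[n] q := by
  induction n with
  | zero => simp [derivative_mul]; ring
  | succ n ih =>
    rw [Function.iterate_succ_apply' derivative (n+1), ih, derivative_add, derivative_mul,
      derivative_mul, derivative_X, derivative_C, iter_succ' (n+1), iter_succ' n]
    push_cast
    simp only [map_add, map_natCast, map_one]
    ring

lemma itd_sq_mul (q : ℝ[X]) (n : ℕ) :
    derivative^[n + 2] ((X ^ 2 - 1) * q) = (X ^ 2 - 1) * derivative^[n + 2] q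
      + C (2 * ((n : ℝ) + 2)) * (X * derivative^[n + 1] q)
      + C (((n : ℝ) + 2) * ((n : ℝ) + 1)) * derivative^[n] q := by
  induction n with
  | zero =>
    show derivative (derivative _) = _
    simp only [derivative_mul, derivative_sub, derivative_pow, derivative_X, derivative_one,
      derivative_add, derivative_C, iter_succ']
    norm_num
    simp only [map_ofNat]
    ring
  | succ n ih =>
    rw [Function.iterate_succ_apply' derivative (n+2), ih, derivative_add, derivative_add,
      derivative_mul, derivative_mul, derivative_mul, derivative_mul, derivative_C,
      derivative_sub, derivative_pow, derivative_X, derivative_one, derivative_C,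
      iter_succ' (n+2), iter_succ' (n+1), iter_succ' n]
    push_cast
    simp only [map_add, map_natCast, map_one, map_mul, map_ofNat]
    ring

lemma base_ode (l : ℕ) : (X ^ 2 - 1) * derivative (w l) = C (2 * (l : ℝ)) * (X * w l) := by
  cases l with
  | zero => simp [w]
  | succ n =>
    rw [w, derivative_pow]
    simp only [derivative_sub, derivative_pow, derivative_X, derivative_one, Nat.add_sub_cancel]
    push_cast
    simp only [map_natCast, map_add, map_mul, map_one, map_ofNat]
    ring


lemma w_def (l : ℕ) : w l = (X ^ 2 - 1) ^ l := rfl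

lemma u_def (l m : ℕ) : u l m = derivative^[l + m] (w l) := rfl

lemma ode (l m : ℕ) (h : m < l) :
    (X ^ 2 - 1) * u l (m + 2) + C (2 * ((m : ℝ) + 1)) * (X * u l (m + 1))
      = C (((l : ℝ) - m) * ((l : ℝ) + m + 1)) * u l m := by
  obtain ⟨s, rfl⟩ : ∃ s, l = m + 1 + s := ⟨l - m - 1, by omega⟩
  have H := congrArg (derivative^[2*m+s+2]) (base_ode (m+1+s))
  rw [show 2*m+s+2 = (2*m+s) + 2 from rfl, itd_sq_mul, iterate_derivative_C_mul,
    show (2*m+s) + 2 = (2*m+s+1) + 1 from rfl, itd_X_mul] at H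
  -- rewrite derivative iterates of w' into u's
  simp only [← Function.iterate_succ_apply derivative, Nat.succ_eq_add_one] at H
  rw [show 2*m+s+1+1+1 = (m+1+s) + (m+2) from by ring, ← u_def,
      show 2*m+s+1+1 = (m+1+s) + (m+1) from by ring, ← u_def,
      show 2*m+s+1 = (m+1+s) + m from by ring, ← u_def] at H
  push_cast at H ⊢
  simp only [map_add, map_mul, map_natCast, map_one, map_ofNat, map_sub] at H ⊢
  linear_combination H

lemma natDegree_w_eq (l : ℕ) : (w l).natDegree = 2 * l := by
  rw [w_def, show ((1:ℝ[X]) = C 1) from (map_one C).symm]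
  rw [Polynomial.Monic.natDegree_pow (monic_X_pow_sub_C (1:ℝ) two_ne_zero)]
  rw [natDegree_X_pow_sub_C]; ring

lemma monic_w (l : ℕ) : (w l).Monic := by
  rw [w_def, show ((1:ℝ[X]) = C 1) from (map_one C).symm]
  exact (monic_X_pow_sub_C (1:ℝ) two_ne_zero).pow l

lemma u_ll (l : ℕ) : u l l = C (((2 * l).factorial : ℝ)) := by
  have hd : (derivative^[2*l] (w l)).natDegree = 0 := by
    have h1 := natDegree_iterate_derivative (w l) (2*l)
    have h2 := natDegree_w l
    omega
  have e := eq_C_of_natDegree_eq_zero hd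
  rw [u_def, show l + l = 2*l from by ring, e, coeff_iterate_derivative]
  rw [show (0 + 2*l) = 2*l from by omega, Nat.descFactorial_self]
  rw [show (w l).coeff (2*l) = 1 from by
    have := (monic_w l).coeff_natDegree
    rwa [natDegree_w_eq] at this]
  simp

lemma Pstep (l m : ℕ) (hm : m < l)
    (h : C (((l + (m+1)).factorial : ℝ)) * derivative^[l - (m+1)] (w l)
      = C (((l - (m+1)).factorial : ℝ)) * ((X^2-1)^(m+1) * u l (m+1))) :
    C (((l + m).factorial : ℝ)) * derivative^[l - m] (w l)
      = C (((l - m).factorial : ℝ)) * ((X^2-1)^m * u l m) := by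
  obtain ⟨s, rfl⟩ : ∃ s, l = m + 1 + s := ⟨l - m - 1, by omega⟩
  have O := ode (m+1+s) m (by omega)
  have H := congrArg derivative h
  rw [derivative_C_mul, derivative_C_mul, iter_succ', derivative_mul, derivative_pow,
    derivative_u, derivative_sub, derivative_pow, derivative_X, derivative_one] at H
  simp only [show m+1+s-(m+1) = s from by omega, show m+1+s-m = s+1 from by omega,
    show m+1+s+(m+1) = (2*m+s+1)+1 from by omega, show m+1+s+m = 2*m+s+1 from by omega,
    Nat.factorial_succ, Nat.add_sub_cancel] at H ⊢
  apply mul_left_cancel₀ (show (C ((2*m+s+2 : ℕ) : ℝ) : ℝ[X]) ≠ 0 from by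
    rw [ne_eq, Polynomial.C_eq_zero]
    positivity)
  push_cast at H O ⊢
  simp only [map_add, map_mul, map_natCast, map_one, map_ofNat, map_sub] at H O ⊢
  linear_combination H + ((s.factorial : ℝ[X])) * (X^2-1)^m * O

lemma q_formula (l m : ℕ) (hm : m ≤ l) :
    C (((l + m).factorial : ℝ)) * derivative^[l - m] (w l)
      = C (((l - m).factorial : ℝ)) * ((X^2-1)^m * u l m) := by
  have key : ∀ t, t ≤ l →
      C (((l + (l - t)).factorial : ℝ)) * derivative^[l - (l - t)] (w l)
        = C (((l - (l - t)).factorial : ℝ)) * ((X^2-1)^(l - t) * u l (l - t)) := by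
    intro t ht
    induction t with
    | zero =>
      simp only [Nat.sub_zero, Nat.sub_self]
      rw [u_ll, show l + l = 2 * l from by ring]
      simp [w_def]
      ring
    | succ t ih =>
      have h1 := ih (by omega)
      rw [show l - t = (l - (t+1)) + 1 from by omega] at h1
      exact Pstep l (l - (t+1)) (by omega) h1
  have h := key (l - m) (by omega)
  rwa [show l - (l - m) = m from by omega] at h

noncomputable def c (l m : ℕ) : ℝ := ((l - m).factorial : ℝ) / ((l + m).factorial : ℝ)

lemma c_pos (l m : ℕ) : 0 < c l m := by
  apply div_pos <;> exact_mod_cast Nat.factorial_pos _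

lemma c_zero (l : ℕ) : c l 0 = 1 := by
  simp [c, Nat.factorial_pos]
  exact_mod_cast (Nat.factorial_pos l).ne'

lemma c_succ (l m : ℕ) (h : m < l) :
    c l m = c l (m + 1) * (((l : ℝ) - m) * ((l : ℝ) + m + 1)) := by
  obtain ⟨s, rfl⟩ : ∃ s, l = m + 1 + s := ⟨l - m - 1, by omega⟩
  unfold c
  rw [show m+1+s - m = s+1 from by omega, show m+1+s - (m+1) = s from by omega,
    show m+1+s + (m+1) = (m+1+s+m)+1 from by omega, Nat.factorial_succ (m+1+s+m),
    Nat.factorial_succ s]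
  have h1 : ((m+1+s+m).factorial : ℝ) ≠ 0 := by exact_mod_cast (Nat.factorial_pos _).ne'
  have h2 : ((m+1+s+m : ℕ) : ℝ) + 1 ≠ 0 := by positivity
  field_simp
  push_cast
  ring

noncomputable def S (l : ℕ) : ℝ[X] :=
  (u l 0)^2 + ∑ j ∈ Finset.range l, C (2 * c l (j+1)) * ((1 - X^2)^(j+1) * (u l (j+1))^2)

lemma tele (l m : ℕ) (hm : m ≤ l) :
    derivative ((u l 0)^2 + ∑ j ∈ Finset.range m,
        C (2 * c l (j+1)) * ((1 - X^2)^(j+1) * (u l (j+1))^2))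
      = C (2 * c l m) * ((1 - X^2)^m * (u l m * u l (m+1))) := by
  induction m with
  | zero =>
    simp only [Finset.range_zero, Finset.sum_empty, add_zero, c_zero, pow_zero]
    rw [derivative_pow, derivative_u]
    push_cast
    simp only [map_mul, map_ofNat, map_one, pow_one]
    ring
  | succ m ih =>
    have O := ode l m (by omega)
    have hc' : (C (c l m) : ℝ[X]) = C (c l (m+1)) * C (((l:ℝ) - m) * ((l:ℝ) + m + 1)) := by
      rw [← map_mul]; exact congrArg C (c_succ l m (by omega))
    rw [Finset.sum_range_succ, ← add_assoc, derivative_add, ih (by omega), derivative_C_mul,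
      derivative_mul, derivative_pow, derivative_sub, derivative_one, derivative_pow,
      derivative_X, derivative_pow, derivative_u]
    simp only [Nat.add_sub_cancel, map_mul, map_add, map_sub, map_natCast, map_one, map_ofNat]
      at O hc' ⊢
    push_cast at O hc' ⊢
    linear_combination (2 * (1 - X^2)^m * (u l m * u l (m+1))) * hc'
      - (2 * C (c l (m+1)) * (1 - X^2)^m * u l (m+1)) * O

lemma derivative_S (l : ℕ) : derivative (S l) = 0 := by
  rw [S, tele l l le_rfl, u_top]
  ring

lemma eval_S (l : ℕ) (x : ℝ) :
    eval x (S l) = (eval x (u l 0))^2 + ∑ j ∈ Finset.range l,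
      2 * c l (j+1) * ((1 - x^2)^(j+1) * (eval x (u l (j+1)))^2) := by
  simp [S, eval_finset_sum]

lemma eval_S_const (l : ℕ) (x : ℝ) : eval x (S l) = eval 1 (S l) := by
  have e := eq_C_of_derivative_eq_zero (derivative_S l)
  rw [e]; simp

lemma eval_one_aux : ∀ (j : ℕ) (r : ℝ[X]),
    eval 1 (derivative^[j] ((X - 1)^j * r)) = (j.factorial : ℝ) * eval 1 r := by
  intro j
  induction j with
  | zero => simp
  | succ j ih =>
    intro r
    rw [Function.iterate_succ_apply, derivative_mul, derivative_pow, derivative_sub,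
      derivative_X, derivative_one, sub_zero, mul_one, Nat.add_sub_cancel]
    rw [iterate_map_add, eval_add, mul_assoc, iterate_derivative_C_mul, eval_mul, eval_C, ih]
    rw [show (X - 1 : ℝ[X])^(j+1) * derivative r = (X-1)^j * ((X-1) * derivative r) from by ring,
      ih]
    simp [Nat.factorial_succ]
    ring

lemma eval_one_u (l : ℕ) : eval 1 (u l 0) = 2^l * (l.factorial : ℝ) := by
  rw [u_def, Nat.add_zero, w_def,
    show ((X^2 - 1 : ℝ[X]))^l = (X - 1)^l * (X + 1)^l from by
      rw [← mul_pow]; ring_nf, eval_one_aux]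
  simp [mul_comm]
  norm_num

lemma eval_one_S (l : ℕ) : eval 1 (S l) = (2^l * (l.factorial : ℝ))^2 := by
  rw [eval_S, eval_one_u]
  have : ∀ j ∈ Finset.range l, 2 * c l (j+1) * ((1 - (1:ℝ)^2)^(j+1) * (eval 1 (u l (j+1)))^2) = 0 := by
    intro j _; norm_num
  rw [Finset.sum_congr rfl this]
  simp

lemma main_bound (l m : ℕ) (hm : m ≤ l) (x : ℝ) (hx : x^2 ≤ 1) :
    c l m * ((1 - x^2)^m * (eval x (u l m))^2) ≤ (2^l * (l.factorial : ℝ))^2 := by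
  have hS : (eval x (u l 0))^2 + (∑ j ∈ Finset.range l,
      2 * c l (j+1) * ((1 - x^2)^(j+1) * (eval x (u l (j+1)))^2))
      = (2^l * (l.factorial : ℝ))^2 := by
    rw [← eval_S, eval_S_const, eval_one_S]
  have hterm : ∀ j ∈ Finset.range l,
      0 ≤ 2 * c l (j+1) * ((1 - x^2)^(j+1) * (eval x (u l (j+1)))^2) := by
    intro j _
    have := c_pos l (j+1)
    have h1 : (0:ℝ) ≤ (1 - x^2)^(j+1) := pow_nonneg (by linarith) _
    positivity
  rcases Nat.eq_zero_or_pos m with rfl | hm0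
  · rw [c_zero, ← hS]
    have := Finset.sum_nonneg hterm
    nlinarith [sq_nonneg (eval x (u l 0))]
  · obtain ⟨j, rfl⟩ : ∃ j, m = j + 1 := ⟨m - 1, by omega⟩
    have hj : j ∈ Finset.range l := Finset.mem_range.mpr (by omega)
    have hle := Finset.single_le_sum hterm hj
    have h1 : (0:ℝ) ≤ (1 - x^2)^(j+1) := pow_nonneg (by linarith) _
    have hc := c_pos l (j+1)
    nlinarith [sq_nonneg (eval x (u l 0)), sq_nonneg (eval x (u l (j+1)))]

lemma iteratedDeriv_eval (p : ℝ[X]) (n : ℕ) (x : ℝ) :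
    iteratedDeriv n (fun y => eval y p) x = eval x (derivative^[n] p) := by
  induction n generalizing p with
  | zero => simp
  | succ n ih =>
    rw [iteratedDeriv_succ']
    have hd : deriv (fun y => eval y p) = fun y => eval y (derivative p) :=
      funext fun y => Polynomial.deriv p
    rw [hd, ih, Function.iterate_succ_apply]

lemma itd_w (l n : ℕ) (x : ℝ) :
    iteratedDeriv n (fun y : ℝ => (y ^ 2 - 1) ^ l) x = eval x (derivative^[n] (w l)) := by
  have : (fun y : ℝ => (y ^ 2 - 1) ^ l) = fun y => eval y (w l) := by
    funext y; simp [w_def]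
  rw [this, iteratedDeriv_eval]

lemma abs_sh (l : ℕ) (k : ℤ) (θ φ : ℝ) :
    ‖sphericalHarmonic l k θ φ‖
      = |shNormFactor l k * assocLegendre l k (Real.cos θ)| := by
  rw [sphericalHarmonic, norm_mul, Complex.norm_real, Real.norm_eq_abs, Complex.norm_exp]
  have : (Complex.I * (k : ℂ) * (φ : ℂ)).re = 0 := by
    simp [Complex.mul_re, Complex.mul_im]
  rw [this, Real.exp_zero, mul_one]

theorem part2 (l : ℕ) (φ : ℝ) : sphericalHarmonic l 0 0 φ =
    ((Real.sqrt ((2 * (l : ℝ) + 1) / (4 * Real.pi)) : ℝ) : ℂ) := by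
  have hfl : ((l.factorial : ℝ)) ≠ 0 := by exact_mod_cast (Nat.factorial_pos l).ne'
  rw [sphericalHarmonic]
  have h1 : Complex.exp (Complex.I * ((0:ℤ) : ℂ) * (φ : ℂ)) = 1 := by
    norm_num
  rw [h1, mul_one]
  congr 1
  rw [shNormFactor, assocLegendre]
  norm_num
  rw [itd_w, show derivative^[l] (w l) = u l 0 from by rw [u_def, Nat.add_zero], eval_one_u,
    div_self hfl, mul_one]
  field_simp
theorem part1 (l : ℕ) (k : ℤ) (hk₁ : -(l : ℤ) ≤ k) (hk₂ : k ≤ (l : ℤ)) (θ φ : ℝ) :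
    ‖sphericalHarmonic l k θ φ‖
      ≤ Real.sqrt ((2 * (l : ℝ) + 1) / (4 * Real.pi)) := by
  have hπ := Real.pi_pos
  set Q : ℝ := (2 * (l : ℝ) + 1) / (4 * Real.pi) with hQdef
  have hQ : 0 ≤ Q := by positivity
  set x : ℝ := Real.cos θ with hxdef
  have hx : x ^ 2 ≤ 1 := by
    have h1 := Real.neg_one_le_cos θ
    have h2 := Real.cos_le_one θ
    nlinarith
  have h1x : (0:ℝ) ≤ 1 - x ^ 2 := by linarith
  have hF : (0:ℝ) < 2 ^ l * l.factorial := by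
    have : (0:ℝ) < (l.factorial : ℝ) := by exact_mod_cast l.factorial_pos
    positivity
  rw [abs_sh]
  suffices h : (shNormFactor l k * assocLegendre l k x) ^ 2 ≤ Q by
    have h2 := Real.sqrt_le_sqrt h
    rwa [Real.sqrt_sq_eq_abs] at h2
  by_cases hk0 : 0 ≤ k
  · obtain ⟨m, rfl⟩ := Int.eq_ofNat_of_zero_le hk0
    have hml : m ≤ l := by exact_mod_cast hk₂
    have key := main_bound l m hml x hx
    rw [shNormFactor, assocLegendre]
    simp only [show ((l:ℤ) - m).toNat = l - m from by omega,
      show ((l:ℤ) + m).toNat = l + m from by omega,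
      show ((m:ℤ) + l).toNat = m + l from by omega, zpow_natCast, Int.cast_natCast]
    rw [itd_w, show derivative^[m + l] (w l) = u l m from by rw [u_def, Nat.add_comm]]
    have hcc : ((l-m).factorial:ℝ)/((l+m).factorial:ℝ) = c l m := rfl
    rw [hcc, ← hQdef]
    have e1 : ((1-x^2) ^ ((m:ℝ)/2))^2 = (1-x^2)^m := by
      rw [← Real.rpow_natCast ((1-x^2) ^ ((m:ℝ)/2)) 2, ← Real.rpow_mul h1x,
        show (m:ℝ)/2 * ((2:ℕ):ℝ) = ((m:ℕ):ℝ) from by push_cast; ring, Real.rpow_natCast]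
    have e2 : ((-1:ℝ)^m)^2 = 1 := by
      rw [← pow_mul]; exact Even.neg_one_pow ⟨m, by ring⟩
    have hc := c_pos l m
    have expand : (Real.sqrt (Q * c l m)
          * ((-1:ℝ)^m / (2^l * l.factorial) * (1-x^2) ^ ((m:ℝ)/2) * eval x (u l m)))^2
        = Q * c l m * ((1-x^2)^m * (eval x (u l m))^2) / (2^l * l.factorial)^2 := by
      rw [mul_pow, Real.sq_sqrt (by positivity), mul_pow, mul_pow, div_pow, e1, e2]
      ring
    rw [expand, div_le_iff₀ (by positivity)]
    nlinarith [mul_le_mul_of_nonneg_left key hQ]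
  · push_neg at hk0
    obtain ⟨m, hm1, rfl⟩ : ∃ m : ℕ, 1 ≤ m ∧ k = -(m:ℤ) := ⟨(-k).toNat, by omega, by omega⟩
    have hml : m ≤ l := by omega
    rw [shNormFactor, assocLegendre]
    simp only [show ((l:ℤ) - -(m:ℤ)).toNat = l + m from by omega,
      show ((l:ℤ) + -(m:ℤ)).toNat = l - m from by omega,
      show (-(m:ℤ) + (l:ℤ)).toNat = l - m from by omega]
    rw [itd_w, ← hQdef]
    have hcast : ((-(m:ℤ) : ℤ) : ℝ) = -(m:ℝ) := by push_cast; ring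
    rw [hcast]
    have e2 : ((-1:ℝ)^(-(m:ℤ)))^2 = 1 := by
      rw [zpow_neg, zpow_natCast, inv_pow, ← pow_mul, mul_comm, pow_mul, neg_one_sq,
        one_pow, inv_one]
    by_cases hx0 : 1 - x^2 = 0
    · rw [hx0, Real.zero_rpow (show -(m:ℝ)/2 ≠ 0 from by
        have : (0:ℝ) < m := by exact_mod_cast hm1
        intro h; nlinarith)]
      simpa using hQ
    · have hpos : (0:ℝ) < 1 - x^2 := lt_of_le_of_ne h1x (Ne.symm hx0)
      have qe := congrArg (eval x) (q_formula l m hml)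
      simp only [eval_mul, eval_C, eval_pow, eval_sub, eval_one, eval_X] at qe
      have hd1 : (0:ℝ) < ((l+m).factorial : ℝ) := by exact_mod_cast (l+m).factorial_pos
      have hn1 : (0:ℝ) < ((l-m).factorial : ℝ) := by exact_mod_cast (l-m).factorial_pos
      have hD : eval x (derivative^[l - m] (w l))
          = ((l-m).factorial : ℝ)/((l+m).factorial:ℝ) * ((x^2-1)^m * eval x (u l m)) := by
        field_simp
        linarith [qe]
      have f3 : ((x^2-1)^m)^2 = ((1-x^2)^m)^2 := by
        rw [show (x^2-1 : ℝ) = -(1-x^2) from by ring, ← pow_mul, ← pow_mul, mul_comm m 2,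
          pow_mul, pow_mul, neg_sq]
      have fkey : (((1-x^2) ^ (-(m:ℝ)/2))^2 * ((x^2-1)^m)^2) = (1-x^2)^m := by
        rw [f3, ← Real.rpow_natCast ((1-x^2) ^ (-(m:ℝ)/2)) 2, ← Real.rpow_mul hpos.le,
          ← Real.rpow_natCast (1-x^2) m, ← Real.rpow_natCast ((1-x^2) ^ ((m:ℕ):ℝ)) 2,
          ← Real.rpow_mul hpos.le, ← Real.rpow_add hpos,
          show -(m:ℝ)/2 * ((2:ℕ):ℝ) + ((m:ℕ):ℝ) * ((2:ℕ):ℝ) = ((m:ℕ):ℝ) from by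
            push_cast; ring, Real.rpow_natCast]
      have key := main_bound l m hml x hx
      have hc := c_pos l m
      have expand : (Real.sqrt (Q * (((l+m).factorial:ℝ)/((l-m).factorial:ℝ)))
            * ((-1:ℝ)^(-(m:ℤ)) / (2^l * l.factorial) * (1-x^2) ^ (-(m:ℝ)/2)
              * eval x (derivative^[l - m] (w l))))^2
          = Q * c l m * ((1-x^2)^m * (eval x (u l m))^2) / (2^l * l.factorial)^2 := by
        calc _ = Q * (((l+m).factorial:ℝ)/((l-m).factorial:ℝ))
              * ((((l-m).factorial:ℝ)/((l+m).factorial:ℝ))^2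
                * (((1-x^2) ^ (-(m:ℝ)/2))^2 * ((x^2-1)^m)^2) * (eval x (u l m))^2)
              / (2^l * l.factorial)^2 := by
              rw [mul_pow, Real.sq_sqrt (by positivity), hD, mul_pow, mul_pow, mul_pow,
                div_pow, e2]
              ring
        _ = _ := by
              rw [fkey, c]
              field_simp
      rw [expand, div_le_iff₀ (by positivity)]
      nlinarith [mul_le_mul_of_nonneg_left key hQ]
end SHbound

/-- spherical harmonics are bounded by `√((2l+1)/(4π))`, and this bound is
attained by `Y_l^0` at `θ = 0`. -/
theorem sphericalHarmonic_bound (l : ℕ) (k : ℤ) (hk₁ : -(l : ℤ) ≤ k) (hk₂ : k ≤ (l : ℤ)) :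
    (∀ θ φ : ℝ, θ ∈ Set.Icc 0 Real.pi → φ ∈ Set.Ico 0 (2 * Real.pi) →
      ‖sphericalHarmonic l k θ φ‖ ≤ Real.sqrt ((2 * (l : ℝ) + 1) / (4 * Real.pi))) ∧
    (∀ φ : ℝ, sphericalHarmonic l 0 0 φ =
      ((Real.sqrt ((2 * (l : ℝ) + 1) / (4 * Real.pi)) : ℝ) : ℂ)) := by
  constructor
  · intro θ φ _ _
    exact SHbound.part1 l k hk₁ hk₂ θ φ
  · intro φ
    exact SHbound.part2 l φ
end
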